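/- arXiv:1311.3658 — 5 statements merged into one kernel-verified Lean document; each statement's English description precedes it below -/
import Mathlib

section
/- The map I is invariant under the Reidemeister 1 move on pseudo-Gauss diagrams: if P′ (with m+1 crossings) has a classical chord e whose two endpoints are cyclically adjacent (with either sign ε(e) = +1 or −1), and deleting e together with its two endpoints from P′ (renumbering the remaining 2m points in cyclic order) yields P, then I(P′) and I(P) are equivalent ℤ-labeled chord diagrams. -/
/-!
Formalization framework for pseudo-Gauss diagrams (Gauss diagrams of
virtual pseudoknots), the interlacement-based invariants `I` and `I_h`,
and the Gauss-diagrammatic Reidemeister moves.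
-/

noncomputable section
open scoped Classical

/-- The cyclic successor of a point on the circle `Fin n` (i.e. `x + 1` mod `n`),
so that `x` and `csucc x` are cyclically adjacent. -/
def csucc {n : ℕ} (x : Fin n) : Fin n :=
  ⟨(x.val + 1) % n, Nat.mod_lt _ x.pos⟩

/-- `CycBtw a x b` : the point `x` lies in the open cyclic interval from `a` to `b`. -/
def CycBtw {n : ℕ} (a x b : Fin n) : Prop :=
  if a < b then a < x ∧ x < b else x < b ∨ a < x

/-- Two chords `c` and `d` (recorded as two-element finsets of points) are
interlaced if exactly one endpoint of `d` lies in the open cyclic interval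
determined by the two endpoints of `c`. -/
def Interlaced {n : ℕ} (c d : Finset (Fin n)) : Prop :=
  ∃ a b : Fin n, a ≠ b ∧ c = {a, b} ∧ (d.filter fun x => CycBtw a x b).card = 1

/-- A pseudo-Gauss diagram with `m` crossings: the points of `Fin (2*m)` in their
natural cyclic order, partitioned into `m` two-element chords; each chord is either
classical or a prechord (member of `pre`), and each classical chord carries a
sign `±1`. -/
structure PGD (m : ℕ) where
  /-- the chords, a partition of `Fin (2*m)` into two-element subsets -/
  chords : Finset (Finset (Fin (2 * m)))
  two_mem : ∀ c ∈ chords, c.card = 2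
  partition : ∀ x : Fin (2 * m), ∃! c, c ∈ chords ∧ x ∈ c
  /-- the prechords -/
  pre : Finset (Finset (Fin (2 * m)))
  pre_sub : pre ⊆ chords
  /-- the sign, relevant on classical chords -/
  sign : Finset (Fin (2 * m)) → ℤ
  sign_pm : ∀ c ∈ chords \ pre, sign c = 1 ∨ sign c = -1

namespace PGD

/-- The classical chords of a pseudo-Gauss diagram. -/
def classicalChords {m : ℕ} (P : PGD m) : Finset (Finset (Fin (2 * m))) :=
  P.chords \ P.pre

/-- `i(c)` : the sum of the signs of the classical chords interlaced with `c`. -/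
def iLabel {m : ℕ} (P : PGD m) (c : Finset (Fin (2 * m))) : ℤ :=
  ∑ d ∈ P.classicalChords.filter (fun d => Interlaced c d), P.sign d

/-- `p(c)` : the parity (in `ℤ/2`) of the number of classical chords interlaced with `c`. -/
def pLabel {m : ℕ} (P : PGD m) (c : Finset (Fin (2 * m))) : ZMod 2 :=
  ((P.classicalChords.filter (fun d => Interlaced c d)).card : ZMod 2)

/-- The endpoints of the prechords of `P`. -/
def preEndpoints {m : ℕ} (P : PGD m) : Finset (Fin (2 * m)) :=
  P.pre.sup id

/-- The renumbering (in cyclic order, starting from `0`) of the prechord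
endpoints of `P`. -/
def idx {m : ℕ} (P : PGD m) (x : Fin (2 * m)) : ℕ :=
  (P.preEndpoints.filter fun y => y < x).card

end PGD

/-- A labeled chord diagram with labels in `α`: points `0, 1, …, points - 1`
in their natural cyclic order, a collection of chords, and a label attached
to each chord. -/
structure LCD (α : Type) where
  points : ℕ
  chords : Finset (Finset ℕ)
  label : Finset ℕ → α

/-- Well-formedness of a labeled chord diagram: the chords are two-element
subsets of `{0, …, points-1}` partitioning the point set. -/
def LCD.WF {α : Type} (D : LCD α) : Prop :=
  (∀ c ∈ D.chords, ∀ x ∈ c, x < D.points) ∧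
  (∀ c ∈ D.chords, c.card = 2) ∧
  (∀ x, x < D.points → ∃! c, c ∈ D.chords ∧ x ∈ c)

/-- A bijection of the point sets preserving the cyclic order, the chords and
the labels (a cyclic-order-preserving bijection of `{0,…,N-1}` is a rotation). -/
def RotMove {α : Type} (D D' : LCD α) : Prop :=
  D.points = D'.points ∧
  ∃ t : ℕ,
    D'.chords = D.chords.image (fun c => c.image fun x => (x + t) % D.points) ∧
    ∀ c ∈ D.chords, D'.label (c.image fun x => (x + t) % D.points) = D.label c

/-- Insertion of a chord with cyclically adjacent endpoints and label `0`
(at the canonical position: the two new points come last); its inverse is the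
deletion of such a chord together with its two endpoints.  Together with
`RotMove` this generates insertion/deletion at an arbitrary cyclic position. -/
def InsMove {α : Type} [Zero α] (D D' : LCD α) : Prop :=
  D'.points = D.points + 2 ∧
  ({D.points, D.points + 1} : Finset ℕ) ∉ D.chords ∧
  D'.chords = insert ({D.points, D.points + 1} : Finset ℕ) D.chords ∧
  D'.label ({D.points, D.points + 1} : Finset ℕ) = 0 ∧
  ∀ c ∈ D.chords, D'.label c = D.label c

/-- One step of equivalence of (well-formed) labeled chord diagrams. -/
def LCDStep {α : Type} [Zero α] (D D' : LCD α) : Prop :=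
  D.WF ∧ D'.WF ∧ (RotMove D D' ∨ InsMove D D' ∨ InsMove D' D)

/-- Equivalence of labeled chord diagrams: the equivalence relation generated by
cyclic-order-preserving bijections and insertion/deletion of `0`-labeled chords
with cyclically adjacent endpoints. -/
def LCDEquiv {α : Type} [Zero α] : LCD α → LCD α → Prop :=
  Relation.EqvGen LCDStep

/-- The invariant `I` : the `ℤ`-labeled chord diagram whose points are the
endpoints of the prechords of `P` (with the induced cyclic order), whose chords
are the prechords of `P`, and whose label on each prechord `c` is `i(c)`. -/
def PGD.Imap {m : ℕ} (P : PGD m) : LCD ℤ where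
  points := P.preEndpoints.card
  chords := P.pre.image fun c => c.image P.idx
  label := fun c' => ∑ c ∈ P.pre.filter (fun c => c.image P.idx = c'), P.iLabel c

/-- The invariant `I_h` : the `ℤ/2`-labeled chord diagram whose points are the
endpoints of the prechords of `P`, whose chords are the prechords of `P`, and
whose label on each prechord `c` is `p(c)`. -/
def PGD.Ihmap {m : ℕ} (P : PGD m) : LCD (ZMod 2) where
  points := P.preEndpoints.card
  chords := P.pre.image fun c => c.image P.idx
  label := fun c' => ∑ c ∈ P.pre.filter (fun c => c.image P.idx = c'), P.pLabel c

/-- The renumbering of the points remaining after deleting the points of `E`: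
the new index of `x` is obtained by collapsing, in cyclic order, the deleted
points below `x`. -/
def ren {n : ℕ} (E : Finset (Fin n)) (x : Fin n) : ℕ :=
  x.val - (E.filter fun y => y < x).card

/-- `Reduces P' R P` : the pseudo-Gauss diagram `P` is obtained from `P'` by
deleting the chords of `R` together with all of their endpoints, renumbering
the remaining points in cyclic order, and keeping all markings and signs. -/
def Reduces {m' m : ℕ} (P' : PGD m') (R : Finset (Finset (Fin (2 * m')))) (P : PGD m) : Prop :=
  R ⊆ P'.chords ∧
  (∀ c ∈ P'.chords, c ∉ R →
    ∃ c' ∈ P.chords,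
      c.image (ren (R.sup id)) = c'.image Fin.val ∧
      (c ∈ P'.pre ↔ c' ∈ P.pre) ∧
      P'.sign c = P.sign c') ∧
  (∀ c' ∈ P.chords, ∃ c ∈ P'.chords, c ∉ R ∧ c.image (ren (R.sup id)) = c'.image Fin.val)

/-- The permutation of the points transposing `p ↔ p+1`, `q ↔ q+1` and `r ↔ r+1`. -/
def tripleSwap {n : ℕ} (p q r : Fin n) (x : Fin n) : Fin n :=
  Equiv.swap p (csucc p) (Equiv.swap q (csucc q) (Equiv.swap r (csucc r) x))

/-- The Reidemeister 3 move on pseudo-Gauss diagrams: `{p, p+1}`, `{q, q+1}`,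
`{r, r+1}` are pairwise disjoint pairs of cyclically adjacent points whose union
is the union of three classical chords of `P`, and `P'` is obtained from `P` by
applying the permutation transposing the points within each pair to all chord
endpoints, keeping all markings and signs. -/
def R3Hyp {m : ℕ} (P P' : PGD m) (p q r : Fin (2 * m)) : Prop :=
  Disjoint ({p, csucc p} : Finset (Fin (2 * m))) {q, csucc q} ∧
  Disjoint ({p, csucc p} : Finset (Fin (2 * m))) {r, csucc r} ∧
  Disjoint ({q, csucc q} : Finset (Fin (2 * m))) {r, csucc r} ∧
  (∃ c₁ ∈ P.classicalChords, ∃ c₂ ∈ P.classicalChords, ∃ c₃ ∈ P.classicalChords,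
    ({p, csucc p} ∪ {q, csucc q} ∪ {r, csucc r} : Finset (Fin (2 * m))) = c₁ ∪ c₂ ∪ c₃) ∧
  P'.chords = P.chords.image (fun c => c.image (tripleSwap p q r)) ∧
  P'.pre = P.pre.image (fun c => c.image (tripleSwap p q r)) ∧
  ∀ c ∈ P.chords, P'.sign (c.image (tripleSwap p q r)) = P.sign c

/-! ### Auxiliary lemmas for the proof of R1-invariance -/

lemma csucc_ne_self {n : ℕ} (hn : 2 ≤ n) (t : Fin n) : t ≠ csucc t := by
  intro h
  have h2 : t.val = (t.val + 1) % n := congrArg Fin.val h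
  have ht := t.isLt
  rcases Nat.lt_or_ge (t.val + 1) n with h1 | h1
  · rw [Nat.mod_eq_of_lt h1] at h2; omega
  · have h3 : t.val + 1 = n := by omega
    rw [h3, Nat.mod_self] at h2
    omega

lemma card_filter_pair {α : Type*} [DecidableEq α] (p : α → Prop) [DecidablePred p]
    (t s : α) (h : t ≠ s) :
    (({t, s} : Finset α).filter p).card
      = (if p t then 1 else 0) + (if p s then 1 else 0) := by
  rw [Finset.filter_insert, Finset.filter_singleton]
  split_ifs with h1 h2 h2
  · rw [Finset.card_insert_of_notMem (by simp [h]), Finset.card_singleton]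
  · rw [Finset.card_insert_of_notMem (by simp), Finset.card_empty]
  · simp
  · simp

lemma ren_pair {n : ℕ} (t s : Fin n) (h : t ≠ s) (x : Fin n) :
    ren {t, s} x
      = x.val - ((if t < x then 1 else 0) + (if s < x then 1 else 0)) := by
  unfold ren
  rw [card_filter_pair (fun y => y < x) t s h]

lemma ren_lt_ren {n : ℕ} {t s x y : Fin n} (hts : t ≠ s)
    (hxt : x ≠ t) (hxs : x ≠ s) (hyt : y ≠ t) (hys : y ≠ s)
    (hxy : x.val < y.val) :
    ren {t, s} x < ren {t, s} y := by
  rw [ren_pair t s hts x, ren_pair t s hts y]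
  have e1 : x.val ≠ t.val := fun hh => hxt (Fin.val_injective hh)
  have e2 : x.val ≠ s.val := fun hh => hxs (Fin.val_injective hh)
  have e3 : y.val ≠ t.val := fun hh => hyt (Fin.val_injective hh)
  have e4 : y.val ≠ s.val := fun hh => hys (Fin.val_injective hh)
  have e5 : t.val ≠ s.val := fun hh => hts (Fin.val_injective hh)
  simp only [Fin.lt_def]
  split_ifs <;> omega

lemma ren_lt_range {m : ℕ} {t x : Fin (2 * (m + 1))}
    (hxt : x ≠ t) (hxs : x ≠ csucc t) :
    ren {t, csucc t} x < 2 * m := by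
  have hts : t ≠ csucc t := csucc_ne_self (by omega) t
  rw [ren_pair t (csucc t) hts x]
  have e1 : x.val ≠ t.val := fun hh => hxt (Fin.val_injective hh)
  have e2 : x.val ≠ (csucc t).val := fun hh => hxs (Fin.val_injective hh)
  have e5 : t.val ≠ (csucc t).val := fun hh => hts (Fin.val_injective hh)
  have h1 := x.isLt
  have h2 := t.isLt
  have h3 := (csucc t).isLt
  simp only [Fin.lt_def]
  split_ifs <;> omega

lemma cycBtw_adj_iff {n : ℕ} (t a b : Fin n) (hat : a ≠ t) (has : a ≠ csucc t)
    (hbt : b ≠ t) (hbs : b ≠ csucc t) :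
    CycBtw a t b ↔ CycBtw a (csucc t) b := by
  have ht := t.isLt
  have ha := a.isLt
  have hb := b.isLt
  have hS : (csucc t).val = (t.val + 1) % n := rfl
  have hS' : (t.val + 1 < n ∧ (csucc t).val = t.val + 1)
      ∨ (t.val + 1 = n ∧ (csucc t).val = 0) := by
    rcases Nat.lt_or_ge (t.val + 1) n with h | h
    · exact Or.inl ⟨h, by rw [hS, Nat.mod_eq_of_lt h]⟩
    · have h3 : t.val + 1 = n := by omega
      exact Or.inr ⟨h3, by rw [hS, h3, Nat.mod_self]⟩
  have e1 : a.val ≠ t.val := fun hh => hat (Fin.val_injective hh)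
  have e2 : a.val ≠ (csucc t).val := fun hh => has (Fin.val_injective hh)
  have e3 : b.val ≠ t.val := fun hh => hbt (Fin.val_injective hh)
  have e4 : b.val ≠ (csucc t).val := fun hh => hbs (Fin.val_injective hh)
  simp only [CycBtw, Fin.lt_def]
  split_ifs <;> omega

lemma filter_image_corr {n n2 : ℕ} (f : Fin n2 → ℕ) (d : Finset (Fin n2))
    (d' : Finset (Fin n)) (φ : Fin n2 → Prop) (φ' : Fin n → Prop)
    [DecidablePred φ] [DecidablePred φ']
    (him : d.image f = d'.image Fin.val)
    (hiff : ∀ x ∈ d, ∀ x' ∈ d', x'.val = f x → (φ x ↔ φ' x')) :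
    (d.filter φ).image f = (d'.filter φ').image Fin.val := by
  ext y
  simp only [Finset.mem_image, Finset.mem_filter]
  constructor
  · rintro ⟨x, ⟨hx, hφ⟩, rfl⟩
    have hmem : f x ∈ d'.image Fin.val := him ▸ Finset.mem_image_of_mem f hx
    obtain ⟨x', hx', hvx⟩ := Finset.mem_image.mp hmem
    exact ⟨x', ⟨hx', (hiff x hx x' hx' hvx).mp hφ⟩, hvx⟩
  · rintro ⟨x', ⟨hx', hφ'⟩, rfl⟩
    have hmem : x'.val ∈ d.image f := by
      rw [him]; exact Finset.mem_image_of_mem Fin.val hx'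
    obtain ⟨x, hx, hvx⟩ := Finset.mem_image.mp hmem
    exact ⟨x, ⟨hx, (hiff x hx x' hx' hvx.symm).mpr hφ'⟩, hvx⟩

set_option maxHeartbeats 1000000 in
/-- `I` is invariant under the Reidemeister 1 move: if `P'`
(with `m+1` crossings) has a classical chord `{t, t+1}` with cyclically adjacent
endpoints (of either sign), and deleting it together with its two endpoints
(renumbering the remaining `2m` points in cyclic order) yields `P`, then
`I(P')` and `I(P)` are equivalent `ℤ`-labeled chord diagrams. -/
theorem Imap_invariant_R1 {m : ℕ} (P' : PGD (m + 1)) (P : PGD m)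
    (t : Fin (2 * (m + 1)))
    (hcl : ({t, csucc t} : Finset (Fin (2 * (m + 1)))) ∈ P'.classicalChords)
    (hred : Reduces P' {({t, csucc t} : Finset (Fin (2 * (m + 1))))} P) :
    LCDEquiv P'.Imap P.Imap := by
  classical
  obtain ⟨hsub, hfwd0, hbwd0⟩ := hred
  simp only [Finset.sup_singleton, id_eq, Finset.mem_singleton] at hfwd0 hbwd0
  set E : Finset (Fin (2 * (m + 1))) := {t, csucc t} with hE
  set f : Fin (2 * (m + 1)) → ℕ := ren E with hfdef
  have hne : t ≠ csucc t := csucc_ne_self (by omega) t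
  have heC : E ∈ P'.chords := (Finset.mem_sdiff.mp hcl).1
  have heNP : E ∉ P'.pre := (Finset.mem_sdiff.mp hcl).2
  have hmemE : ∀ x : Fin (2 * (m + 1)), x ∉ E ↔ (x ≠ t ∧ x ≠ csucc t) := by
    intro x; rw [hE]; simp [not_or]
  -- chords other than E are disjoint from E
  have hdisj : ∀ c ∈ P'.chords, c ≠ E → ∀ x ∈ c, x ∉ E := by
    intro c hc hcne x hx hxe
    obtain ⟨u, _, huniq⟩ := P'.partition x
    exact hcne ((huniq c ⟨hc, hx⟩).trans (huniq E ⟨heC, hxe⟩).symm)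
  -- monotonicity of the renumbering f on the complement of E
  have hmono : ∀ x y : Fin (2 * (m + 1)), x ∉ E → y ∉ E →
      (x.val < y.val ↔ f x < f y) := by
    intro x y hx hy
    rw [hmemE] at hx hy
    constructor
    · intro h
      exact ren_lt_ren hne hx.1 hx.2 hy.1 hy.2 h
    · intro h
      by_contra hcon
      rcases Nat.lt_or_ge y.val x.val with h1 | h1
      · have h2 : f y < f x := ren_lt_ren hne hy.1 hy.2 hx.1 hx.2 h1
        omega
      · have : x = y := Fin.val_injective (by omega)
        subst this; omega
  have hinj : ∀ x y : Fin (2 * (m + 1)), x ∉ E → y ∉ E → f x = f y → x = y := by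
    intro x y hx hy h
    rcases Nat.lt_trichotomy x.val y.val with h1 | h1 | h1
    · exact absurd ((hmono x y hx hy).mp h1) (by omega)
    · exact Fin.val_injective h1
    · exact absurd ((hmono y x hy hx).mp h1) (by omega)
  -- injectivity of image-by-f on sets disjoint from E
  have hfinj : ∀ (d₁ d₂ : Finset (Fin (2 * (m + 1)))),
      (∀ x ∈ d₁, x ∉ E) → (∀ x ∈ d₂, x ∉ E) → d₁.image f = d₂.image f → d₁ = d₂ := by
    intro d₁ d₂ h1 h2 h
    ext x
    constructor
    · intro hx
      have hmem : f x ∈ d₂.image f := h ▸ Finset.mem_image_of_mem f hx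
      obtain ⟨y, hy, hfy⟩ := Finset.mem_image.mp hmem
      exact (hinj y x (h2 y hy) (h1 x hx) hfy) ▸ hy
    · intro hx
      have hmem : f x ∈ d₁.image f := h.symm ▸ Finset.mem_image_of_mem f hx
      obtain ⟨y, hy, hfy⟩ := Finset.mem_image.mp hmem
      exact (hinj y x (h1 y hy) (h2 x hx) hfy) ▸ hy
  have hvalinj : ∀ (d₁ d₂ : Finset (Fin (2 * m))),
      d₁.image Fin.val = d₂.image Fin.val → d₁ = d₂ :=
    fun _ _ h => Finset.image_injective Fin.val_injective h
  -- the chord correspondence Φ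
  have hfwd : ∀ c : Finset (Fin (2 * (m + 1))), ∃ c',
      c ∈ P'.chords → c ≠ E → c' ∈ P.chords ∧ c.image f = c'.image Fin.val ∧
        (c ∈ P'.pre ↔ c' ∈ P.pre) ∧ P'.sign c = P.sign c' := by
    intro c
    by_cases h : c ∈ P'.chords ∧ c ≠ E
    · obtain ⟨c', hc', h1, h2, h3⟩ := hfwd0 c h.1 h.2
      exact ⟨c', fun _ _ => ⟨hc', h1, h2, h3⟩⟩
    · exact ⟨∅, fun h1 h2 => absurd ⟨h1, h2⟩ h⟩
  choose Φ hΦ using hfwd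
  have hΦuniq : ∀ c (hc : c ∈ P'.chords) (hcne : c ≠ E),
      ∀ c' : Finset (Fin (2 * m)), c.image f = c'.image Fin.val → Φ c = c' := by
    intro c hc hcne c' h
    exact hvalinj _ _ (((hΦ c hc hcne).2.1).symm.trans h)
  have hbwd : ∀ c' ∈ P.chords, ∃ c, c ∈ P'.chords ∧ c ≠ E ∧ Φ c = c' := by
    intro c' hc'
    obtain ⟨c, hc, hcne, him⟩ := hbwd0 c' hc'
    exact ⟨c, hc, hcne, hΦuniq c hc hcne c' him⟩
  have hΦinj : ∀ c₁ c₂, c₁ ∈ P'.chords → c₁ ≠ E → c₂ ∈ P'.chords → c₂ ≠ E →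
      Φ c₁ = Φ c₂ → c₁ = c₂ := by
    intro c₁ c₂ h1 h1e h2 h2e h
    refine hfinj c₁ c₂ (hdisj c₁ h1 h1e) (hdisj c₂ h2 h2e) ?_
    rw [(hΦ c₁ h1 h1e).2.1, (hΦ c₂ h2 h2e).2.1, h]
  -- cardinality transport
  have hcard : ∀ (d : Finset (Fin (2 * (m + 1)))) (d' : Finset (Fin (2 * m))),
      (∀ x ∈ d, x ∉ E) → d.image f = d'.image Fin.val → d.card = d'.card := by
    intro d d' hd him
    have h1 : (d.image f).card = d.card :=
      Finset.card_image_of_injOn (fun x hx y hy h => hinj x y (hd x hx) (hd y hy) h)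
    have h2 : (d'.image Fin.val).card = d'.card :=
      Finset.card_image_of_injOn (Fin.val_injective.injOn)
    rw [← h1, him, h2]
  -- CycBtw transport
  have hcb : ∀ (a x b : Fin (2 * (m + 1))) (a2 x2 b2 : Fin (2 * m)),
      a ∉ E → x ∉ E → b ∉ E →
      a2.val = f a → x2.val = f x → b2.val = f b →
      (CycBtw a x b ↔ CycBtw a2 x2 b2) := by
    intro a x b a2 x2 b2 ha hx hb h1 h2 h3
    have m1 := hmono a b ha hb
    have m2 := hmono a x ha hx
    have m3 := hmono x b hx hb
    simp only [CycBtw, Fin.lt_def, h1, h2, h3]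
    split_ifs <;> omega
  -- E is interlaced with no other chord
  have hnotint : ∀ c ∈ P'.chords, c ≠ E → ¬ Interlaced c E := by
    rintro c hc hcne ⟨a, b, hab, hcab, hcard1⟩
    have ha : a ∉ E := hdisj c hc hcne a (by rw [hcab]; simp)
    have hb : b ∉ E := hdisj c hc hcne b (by rw [hcab]; simp)
    rw [hmemE] at ha hb
    rw [hE, card_filter_pair (fun x => CycBtw a x b) t (csucc t) hne] at hcard1
    have hiff := cycBtw_adj_iff t a b ha.1 ha.2 hb.1 hb.2
    rcases Classical.em (CycBtw a t b) with h | h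
    · rw [if_pos h, if_pos (hiff.mp h)] at hcard1
      omega
    · rw [if_neg h, if_neg (fun hh => h (hiff.mpr hh))] at hcard1
      omega
  -- interlacement transport
  have hint : ∀ c ∈ P'.chords, ∀ d ∈ P'.chords, c ≠ E → d ≠ E →
      (Interlaced c d ↔ Interlaced (Φ c) (Φ d)) := by
    intro c hc d hd hcne hdne
    have hcim := (hΦ c hc hcne).2.1
    have hdim := (hΦ d hd hdne).2.1
    have hcE := hdisj c hc hcne
    have hdE := hdisj d hd hdne
    constructor
    · rintro ⟨a, b, hab, hcab, hcard1⟩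
      have hac : a ∈ c := by rw [hcab]; simp
      have hbc : b ∈ c := by rw [hcab]; simp
      have haE := hcE a hac
      have hbE := hcE b hbc
      have hmema : f a ∈ (Φ c).image Fin.val := hcim ▸ Finset.mem_image_of_mem f hac
      have hmemb : f b ∈ (Φ c).image Fin.val := hcim ▸ Finset.mem_image_of_mem f hbc
      obtain ⟨a2, ha2, hva⟩ := Finset.mem_image.mp hmema
      obtain ⟨b2, hb2, hvb⟩ := Finset.mem_image.mp hmemb
      refine ⟨a2, b2, ?_, ?_, ?_⟩
      · intro h
        exact hab (hinj a b haE hbE (by rw [← hva, ← hvb, h]))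
      · refine hvalinj _ _ ?_
        rw [← hcim, hcab]
        rw [Finset.image_insert, Finset.image_singleton,
          Finset.image_insert, Finset.image_singleton, hva, hvb]
      · have hfic := filter_image_corr f d (Φ d) (fun x => CycBtw a x b)
          (fun x2 => CycBtw a2 x2 b2) hdim
          (fun x hx x2 hx2 hv => hcb a x b a2 x2 b2 haE (hdE x hx) hbE hva hv hvb)
        have hc2 := hcard (d.filter fun x => CycBtw a x b)
          ((Φ d).filter fun x2 => CycBtw a2 x2 b2)
          (fun x hx => hdE x (Finset.mem_filter.mp hx).1) hfic
        rw [← hc2]; exact hcard1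
    · rintro ⟨a2, b2, hab2, hcab2, hcard1⟩
      have ha2 : a2 ∈ Φ c := by rw [hcab2]; simp
      have hb2 : b2 ∈ Φ c := by rw [hcab2]; simp
      have hmema : a2.val ∈ c.image f := by
        rw [hcim]; exact Finset.mem_image_of_mem Fin.val ha2
      have hmemb : b2.val ∈ c.image f := by
        rw [hcim]; exact Finset.mem_image_of_mem Fin.val hb2
      obtain ⟨a, hac, hva⟩ := Finset.mem_image.mp hmema
      obtain ⟨b, hbc, hvb⟩ := Finset.mem_image.mp hmemb
      have haE := hcE a hac
      have hbE := hcE b hbc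
      refine ⟨a, b, ?_, ?_, ?_⟩
      · intro h
        subst h
        exact hab2 (Fin.val_injective (by rw [← hva, ← hvb]))
      · refine hfinj c {a, b} hcE (fun x hx => by
          rcases Finset.mem_insert.mp hx with h | h
          · exact h ▸ haE
          · exact (Finset.mem_singleton.mp h) ▸ hbE) ?_
        rw [hcim, hcab2]
        rw [Finset.image_insert, Finset.image_singleton,
          Finset.image_insert, Finset.image_singleton, hva, hvb]
      · have hfic := filter_image_corr f d (Φ d) (fun x => CycBtw a x b)
          (fun x2 => CycBtw a2 x2 b2) hdim
          (fun x hx x2 hx2 hv => hcb a x b a2 x2 b2 haE (hdE x hx) hbE hva.symm hv hvb.symm)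
        have hc2 := hcard (d.filter fun x => CycBtw a x b)
          ((Φ d).filter fun x2 => CycBtw a2 x2 b2)
          (fun x hx => hdE x (Finset.mem_filter.mp hx).1) hfic
        rw [hc2]; exact hcard1
  -- prechord endpoints
  have hPEsub : ∀ x ∈ P'.preEndpoints, x ∉ E := by
    intro x hx
    obtain ⟨c, hc, hxc⟩ := Finset.mem_sup.mp hx
    exact hdisj c (P'.pre_sub hc) (fun h => heNP (h ▸ hc)) x hxc
  have hPEim : P'.preEndpoints.image f = P.preEndpoints.image Fin.val := by
    ext y
    simp only [Finset.mem_image, PGD.preEndpoints, Finset.mem_sup, id_eq]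
    constructor
    · rintro ⟨x, ⟨c, hcpre, hxc⟩, rfl⟩
      have hc := P'.pre_sub hcpre
      have hcne : c ≠ E := fun h => heNP (h ▸ hcpre)
      have hmem : f x ∈ (Φ c).image Fin.val :=
        (hΦ c hc hcne).2.1 ▸ Finset.mem_image_of_mem f hxc
      obtain ⟨x', hx', hvx⟩ := Finset.mem_image.mp hmem
      exact ⟨x', ⟨Φ c, (hΦ c hc hcne).2.2.1.mp hcpre, hx'⟩, hvx⟩
    · rintro ⟨x', ⟨c', hc'pre, hx'c⟩, rfl⟩
      obtain ⟨c, hc, hcne, hΦc⟩ := hbwd c' (P.pre_sub hc'pre)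
      have hcpre : c ∈ P'.pre := (hΦ c hc hcne).2.2.1.mpr (hΦc ▸ hc'pre)
      have hmem : x'.val ∈ c.image f := by
        rw [(hΦ c hc hcne).2.1, hΦc]
        exact Finset.mem_image_of_mem Fin.val hx'c
      obtain ⟨x, hx, hvx⟩ := Finset.mem_image.mp hmem
      exact ⟨x, ⟨c, hcpre, hx⟩, hvx⟩
  -- idx transport
  have hidx : ∀ x ∈ P'.preEndpoints, ∀ x' : Fin (2 * m), x'.val = f x →
      P.idx x' = P'.idx x := by
    intro x hx x' hvx
    have hfic := filter_image_corr f P'.preEndpoints P.preEndpoints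
      (fun y => y < x) (fun y' => y' < x') hPEim ?_
    · exact (hcard _ _ (fun y hy => hPEsub y (Finset.mem_filter.mp hy).1) hfic).symm
    · intro y hy y' hy' hv
      have := hmono y x (hPEsub y hy) (hPEsub x hx)
      simp only [Fin.lt_def, hv, hvx]
      exact this
  -- chord image transport
  have hchordimg : ∀ c ∈ P'.pre, c.image P'.idx = (Φ c).image P.idx := by
    intro c hcpre
    have hc := P'.pre_sub hcpre
    have hcne : c ≠ E := fun h => heNP (h ▸ hcpre)
    have hcim := (hΦ c hc hcne).2.1
    ext k
    simp only [Finset.mem_image]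
    constructor
    · rintro ⟨x, hx, rfl⟩
      have hxPE : x ∈ P'.preEndpoints := Finset.mem_sup.mpr ⟨c, hcpre, hx⟩
      have hmem : f x ∈ (Φ c).image Fin.val := hcim ▸ Finset.mem_image_of_mem f hx
      obtain ⟨x', hx', hvx⟩ := Finset.mem_image.mp hmem
      exact ⟨x', hx', hidx x hxPE x' hvx⟩
    · rintro ⟨x', hx', rfl⟩
      have hmem : x'.val ∈ c.image f := by
        rw [hcim]; exact Finset.mem_image_of_mem Fin.val hx'
      obtain ⟨x, hx, hvx⟩ := Finset.mem_image.mp hmem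
      have hxPE : x ∈ P'.preEndpoints := Finset.mem_sup.mpr ⟨c, hcpre, hx⟩
      exact ⟨x, hx, (hidx x hxPE x' hvx.symm).symm⟩
  -- label transport
  have hiLab : ∀ c ∈ P'.pre, P'.iLabel c = P.iLabel (Φ c) := by
    intro c hcpre
    have hc := P'.pre_sub hcpre
    have hcne : c ≠ E := fun h => heNP (h ▸ hcpre)
    unfold PGD.iLabel PGD.classicalChords
    refine Finset.sum_bij (fun d _ => Φ d) ?_ ?_ ?_ ?_
    · intro d hd
      simp only [Finset.mem_filter, Finset.mem_sdiff] at hd ⊢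
      have hdC := hd.1.1
      have hdne : d ≠ E := fun h => hnotint c hc hcne (h ▸ hd.2)
      exact ⟨⟨(hΦ d hdC hdne).1, fun hp => hd.1.2 ((hΦ d hdC hdne).2.2.1.mpr hp)⟩,
        (hint c hc d hdC hcne hdne).mp hd.2⟩
    · intro d₁ h₁ d₂ h₂ heq
      simp only [Finset.mem_filter, Finset.mem_sdiff] at h₁ h₂
      exact hΦinj d₁ d₂ h₁.1.1 (fun h => hnotint c hc hcne (h ▸ h₁.2)) h₂.1.1
        (fun h => hnotint c hc hcne (h ▸ h₂.2)) heq
    · intro d' hd'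
      simp only [Finset.mem_filter, Finset.mem_sdiff] at hd'
      obtain ⟨d, hdC, hdne, hΦd⟩ := hbwd d' hd'.1.1
      refine ⟨d, ?_, hΦd⟩
      simp only [Finset.mem_filter, Finset.mem_sdiff]
      exact ⟨⟨hdC, fun hp => hd'.1.2 (hΦd ▸ (hΦ d hdC hdne).2.2.1.mp hp)⟩,
        (hint c hc d hdC hcne hdne).mpr (hΦd.symm ▸ hd'.2)⟩
    · intro d hd
      simp only [Finset.mem_filter, Finset.mem_sdiff] at hd
      have hdne : d ≠ E := fun h => hnotint c hc hcne (h ▸ hd.2)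
      exact (hΦ d hd.1.1 hdne).2.2.2
  -- points
  have hpoints : P'.preEndpoints.card = P.preEndpoints.card :=
    hcard _ _ hPEsub hPEim
  -- chords
  have hchords : P'.pre.image (fun c => c.image P'.idx)
      = P.pre.image (fun c => c.image P.idx) := by
    ext s
    simp only [Finset.mem_image]
    constructor
    · rintro ⟨c, hcpre, rfl⟩
      have hc := P'.pre_sub hcpre
      have hcne : c ≠ E := fun h => heNP (h ▸ hcpre)
      exact ⟨Φ c, (hΦ c hc hcne).2.2.1.mp hcpre, (hchordimg c hcpre).symm⟩
    · rintro ⟨c', hc'pre, rfl⟩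
      obtain ⟨c, hc, hcne, hΦc⟩ := hbwd c' (P.pre_sub hc'pre)
      have hcpre : c ∈ P'.pre := (hΦ c hc hcne).2.2.1.mpr (hΦc ▸ hc'pre)
      exact ⟨c, hcpre, by rw [hchordimg c hcpre, hΦc]⟩
  -- labels
  have hlabel : ∀ s : Finset ℕ,
      (∑ c ∈ P'.pre.filter (fun c => c.image P'.idx = s), P'.iLabel c)
      = ∑ c ∈ P.pre.filter (fun c => c.image P.idx = s), P.iLabel c := by
    intro s
    refine Finset.sum_bij (fun c _ => Φ c) ?_ ?_ ?_ ?_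
    · intro c hcmem
      simp only [Finset.mem_filter] at hcmem ⊢
      have hc := P'.pre_sub hcmem.1
      have hcne : c ≠ E := fun h => heNP (h ▸ hcmem.1)
      exact ⟨(hΦ c hc hcne).2.2.1.mp hcmem.1, by rw [← hchordimg c hcmem.1]; exact hcmem.2⟩
    · intro c₁ h₁ c₂ h₂ heq
      simp only [Finset.mem_filter] at h₁ h₂
      exact hΦinj c₁ c₂ (P'.pre_sub h₁.1) (fun h => heNP (h ▸ h₁.1))
        (P'.pre_sub h₂.1) (fun h => heNP (h ▸ h₂.1)) heq
    · intro c' hc'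
      simp only [Finset.mem_filter] at hc'
      obtain ⟨c, hc, hcne, hΦc⟩ := hbwd c' (P.pre_sub hc'.1)
      have hcpre : c ∈ P'.pre := (hΦ c hc hcne).2.2.1.mpr (hΦc ▸ hc'.1)
      refine ⟨c, ?_, hΦc⟩
      simp only [Finset.mem_filter]
      exact ⟨hcpre, by rw [hchordimg c hcpre, hΦc]; exact hc'.2⟩
    · intro c hcmem
      simp only [Finset.mem_filter] at hcmem
      exact hiLab c hcmem.1
  -- conclusion
  have hEq : P'.Imap = P.Imap := by
    show LCD.mk _ _ _ = LCD.mk _ _ _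
    simp only [LCD.mk.injEq]
    exact ⟨hpoints, hchords, funext hlabel⟩
  rw [hEq]
  exact Relation.EqvGen.refl P.Imap
end
end

section
/- The map I is invariant under the pseudo-Reidemeister 1 move on pseudo-Gauss diagrams: if P′ (with m+1 crossings) has a prechord e whose two endpoints are cyclically adjacent, and deleting e together with its two endpoints from P′ (renumbering the remaining 2m points in cyclic order) yields P, then I(P′) and I(P) are equivalent ℤ-labeled chord diagrams. -/
/-!
Formalization framework for pseudo-Gauss diagrams (Gauss diagrams of
virtual pseudoknots), the interlacement-based invariants `I` and `I_h`,
and the Gauss-diagrammatic Reidemeister moves.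
-/

noncomputable section
open scoped Classical

/-! ### Auxiliary rank lemmas -/

open Finset

/-- Rank of `x` in the finite set `S`: the number of elements of `S` below `x`. -/
def rk {α : Type*} [LinearOrder α] (S : Finset α) (x : α) : ℕ :=
  (S.filter fun y => y < x).card

lemma rk_le_card {α : Type*} [LinearOrder α] (S : Finset α) (x : α) :
    rk S x ≤ S.card :=
  Finset.card_le_card (Finset.filter_subset _ _)

lemma rk_lt_card {α : Type*} [LinearOrder α] {S : Finset α} {x : α} (hx : x ∈ S) :
    rk S x < S.card := by
  apply Finset.card_lt_card
  refine ⟨Finset.filter_subset _ _, fun h => ?_⟩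
  have := h hx
  simp at this

lemma rk_lt_rk {α : Type*} [LinearOrder α] {S : Finset α} {x y : α} (hx : x ∈ S)
    (hxy : x < y) : rk S x < rk S y := by
  apply Finset.card_lt_card
  constructor
  · intro z hz
    simp only [Finset.mem_filter] at hz ⊢
    exact ⟨hz.1, lt_trans hz.2 hxy⟩
  · intro h
    have := h (Finset.mem_filter.2 ⟨hx, hxy⟩)
    simp at this

lemma rk_mono {α : Type*} [LinearOrder α] (S : Finset α) {x y : α} (hxy : x ≤ y) :
    rk S x ≤ rk S y := by
  apply Finset.card_le_card
  intro z hz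
  simp only [Finset.mem_filter] at hz ⊢
  exact ⟨hz.1, lt_of_lt_of_le hz.2 hxy⟩

lemma rk_injOn {α : Type*} [LinearOrder α] {S : Finset α} {x y : α} (hx : x ∈ S)
    (hy : y ∈ S) (h : rk S x = rk S y) : x = y := by
  rcases lt_trichotomy x y with hl | he | hl
  · exact absurd h (Nat.ne_of_lt (rk_lt_rk hx hl))
  · exact he
  · exact absurd h.symm (Nat.ne_of_lt (rk_lt_rk hy hl))

lemma rk_lt_iff {α : Type*} [LinearOrder α] {S : Finset α} {x y : α} (hx : x ∈ S) :
    rk S x < rk S y ↔ x < y := by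
  constructor
  · intro h
    by_contra hc
    exact absurd (rk_mono S (not_lt.1 hc)) (not_le.2 h)
  · exact rk_lt_rk hx

lemma rk_surj {α : Type*} [LinearOrder α] {S : Finset α} {k : ℕ} (hk : k < S.card) :
    ∃ x ∈ S, rk S x = k := by
  have hinj : Set.InjOn (rk S) S := fun a ha b hb h => rk_injOn ha hb h
  have hcard : (S.image (rk S)).card = S.card := Finset.card_image_of_injOn hinj
  have hsub : S.image (rk S) ⊆ Finset.range S.card := by
    intro z hz
    obtain ⟨x, hx, rfl⟩ := Finset.mem_image.1 hz
    exact Finset.mem_range.2 (rk_lt_card hx)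
  have : S.image (rk S) = Finset.range S.card :=
    Finset.eq_of_subset_of_card_le hsub (by rw [hcard, Finset.card_range])
  have : k ∈ S.image (rk S) := by rw [this]; exact Finset.mem_range.2 hk
  obtain ⟨x, hx, h⟩ := Finset.mem_image.1 this
  exact ⟨x, hx, h⟩

lemma rk_image {α β : Type*} [LinearOrder α] [LinearOrder β] {S : Finset α}
    (f : α → β) (hf : ∀ x ∈ S, ∀ y ∈ S, (f x < f y ↔ x < y)) {x : α} (hx : x ∈ S) :
    rk (S.image f) (f x) = rk S x := by
  have hinj : ∀ a ∈ S, ∀ b ∈ S, f a = f b → a = b := by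
    intro a ha b hb h
    rcases lt_trichotomy a b with hl | he | hl
    · exact absurd h (ne_of_lt ((hf a ha b hb).2 hl))
    · exact he
    · exact absurd h.symm (ne_of_lt ((hf b hb a ha).2 hl))
  unfold rk
  have himg : (S.image f).filter (fun y => y < f x) =
      (S.filter fun y => y < x).image f := by
    ext b
    simp only [Finset.mem_filter, Finset.mem_image]
    constructor
    · rintro ⟨⟨y, hy, rfl⟩, hlt⟩
      exact ⟨y, ⟨hy, (hf y hy x hx).1 hlt⟩, rfl⟩
    · rintro ⟨y, ⟨hy, hlt⟩, rfl⟩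
      exact ⟨⟨y, hy, rfl⟩, (hf y hy x hx).2 hlt⟩
  rw [himg]
  exact Finset.card_image_of_injOn fun a ha b hb h =>
    hinj a (Finset.mem_of_mem_filter _ ha) b (Finset.mem_of_mem_filter _ hb) h

lemma rk_union {α : Type*} [LinearOrder α] {A B : Finset α} (h : Disjoint A B) (x : α) :
    rk (A ∪ B) x = rk A x + rk B x := by
  unfold rk
  rw [Finset.filter_union]
  exact Finset.card_union_of_disjoint (Finset.disjoint_filter_filter h)

/-- Image under a map injective on a superset determines the set. -/
lemma image_eq_of_image_eq {α β : Type*} [DecidableEq β] {f : α → β} {S c d : Finset α}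
    (hinj : ∀ x ∈ S, ∀ y ∈ S, f x = f y → x = y) (hc : c ⊆ S) (hd : d ⊆ S)
    (h : c.image f = d.image f) : c = d := by
  ext x
  constructor
  · intro hx
    have : f x ∈ d.image f := h ▸ Finset.mem_image_of_mem f hx
    obtain ⟨y, hy, hxy⟩ := Finset.mem_image.1 this
    rwa [hinj y (hd hy) x (hc hx) hxy] at hy
  · intro hx
    have : f x ∈ c.image f := h.symm ▸ Finset.mem_image_of_mem f hx
    obtain ⟨y, hy, hxy⟩ := Finset.mem_image.1 this
    rwa [hinj y (hc hy) x (hd hx) hxy] at hy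
/-! ### ℕ-valued cyclic betweenness and interlacement -/

/-- `ℕ`-valued version of `CycBtw`. -/
def NCycBtw (a x b : ℕ) : Prop :=
  if a < b then a < x ∧ x < b else x < b ∨ a < x

/-- `ℕ`-valued version of `Interlaced`. -/
def NInterlaced (c d : Finset ℕ) : Prop :=
  ∃ a b : ℕ, a ≠ b ∧ c = {a, b} ∧ (d.filter fun x => NCycBtw a x b).card = 1

lemma ncycbtw_iff {n : ℕ} (u : Fin n → ℕ) {S : Finset (Fin n)}
    (hu : ∀ x ∈ S, ∀ y ∈ S, (u x < u y ↔ x < y)) {a b x : Fin n}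
    (ha : a ∈ S) (hb : b ∈ S) (hx : x ∈ S) :
    NCycBtw (u a) (u x) (u b) ↔ CycBtw a x b := by
  unfold NCycBtw CycBtw
  by_cases h : a < b
  · rw [if_pos h, if_pos ((hu a ha b hb).2 h), hu a ha x hx, hu x hx b hb]
  · rw [if_neg h, if_neg (fun h' => h ((hu a ha b hb).1 h')), hu x hx b hb, hu a ha x hx]

lemma interlaced_map {n : ℕ} (u : Fin n → ℕ) {c d : Finset (Fin n)}
    (hu : ∀ x ∈ c ∪ d, ∀ y ∈ c ∪ d, (u x < u y ↔ x < y)) :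
    Interlaced c d ↔ NInterlaced (c.image u) (d.image u) := by
  classical
  have hinj : ∀ x ∈ c ∪ d, ∀ y ∈ c ∪ d, u x = u y → x = y := by
    intro a ha b hb h
    rcases lt_trichotomy a b with hl | he | hl
    · exact absurd h (ne_of_lt ((hu a ha b hb).2 hl))
    · exact he
    · exact absurd h.symm (ne_of_lt ((hu b hb a ha).2 hl))
  have hfilter : ∀ a b : Fin n, a ∈ c ∪ d → b ∈ c ∪ d →
      ((d.image u).filter fun x => NCycBtw (u a) x (u b)).card =
        (d.filter fun x => CycBtw a x b).card := by
    intro a b ha hb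
    have himg : (d.image u).filter (fun x => NCycBtw (u a) x (u b)) =
        (d.filter fun x => CycBtw a x b).image u := by
      ext z
      simp only [Finset.mem_filter, Finset.mem_image]
      constructor
      · rintro ⟨⟨y, hy, rfl⟩, hz⟩
        exact ⟨y, ⟨hy, (ncycbtw_iff u hu ha hb (Finset.mem_union_right _ hy)).1 hz⟩, rfl⟩
      · rintro ⟨y, ⟨hy, hz⟩, rfl⟩
        exact ⟨⟨y, hy, rfl⟩, (ncycbtw_iff u hu ha hb (Finset.mem_union_right _ hy)).2 hz⟩
    rw [himg]
    exact Finset.card_image_of_injOn fun p hp q hq h =>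
      hinj p (Finset.mem_union_right _ (Finset.mem_of_mem_filter _ hp))
        q (Finset.mem_union_right _ (Finset.mem_of_mem_filter _ hq)) h
  constructor
  · rintro ⟨a, b, hab, rfl, h1⟩
    have ha : a ∈ ({a, b} : Finset (Fin n)) ∪ d := by simp
    have hb : b ∈ ({a, b} : Finset (Fin n)) ∪ d := by simp
    refine ⟨u a, u b, fun h => hab (hinj a ha b hb h), by simp [Finset.image_insert], ?_⟩
    rw [hfilter a b ha hb]; exact h1
  · rintro ⟨a', b', hab', hc', h1⟩
    have ha' : a' ∈ c.image u := by rw [hc']; simp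
    have hb' : b' ∈ c.image u := by rw [hc']; simp
    obtain ⟨a, ha, rfl⟩ := Finset.mem_image.1 ha'
    obtain ⟨b, hb, rfl⟩ := Finset.mem_image.1 hb'
    have hac : a ∈ c ∪ d := Finset.mem_union_left _ ha
    have hbc : b ∈ c ∪ d := Finset.mem_union_left _ hb
    have hab : a ≠ b := fun h => hab' (h ▸ rfl)
    have hceq : c = {a, b} := by
      ext z
      simp only [Finset.mem_insert, Finset.mem_singleton]
      constructor
      · intro hz
        have : u z ∈ ({u a, u b} : Finset ℕ) := by rw [← hc']; exact Finset.mem_image_of_mem u hz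
        simp only [Finset.mem_insert, Finset.mem_singleton] at this
        rcases this with h | h
        · exact Or.inl (hinj z (Finset.mem_union_left _ hz) a hac h)
        · exact Or.inr (hinj z (Finset.mem_union_left _ hz) b hbc h)
      · rintro (rfl | rfl) <;> assumption
    refine ⟨a, b, hab, hceq, ?_⟩
    rw [← hfilter a b hac hbc]; exact h1

/-! ### Rotation lemmas -/

lemma rot_cancel {M r a : ℕ} (hr : r ≤ M) (ha : a < M) :
    ((a + r) % M + (M - r)) % M = a := by
  rw [Nat.mod_add_mod]
  have h1 : a + r + (M - r) = a + M := by omega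
  rw [h1, Nat.add_mod_right, Nat.mod_eq_of_lt ha]

lemma image_rot_rot {c : Finset ℕ} {M r : ℕ} (hr : r ≤ M) (hc : ∀ x ∈ c, x < M) :
    (c.image fun x => (x + r) % M).image (fun x => (x + (M - r)) % M) = c := by
  rw [Finset.image_image]
  ext z
  simp only [Finset.mem_image, Function.comp_apply]
  constructor
  · rintro ⟨x, hx, rfl⟩
    rw [rot_cancel hr (hc x hx)]; exact hx
  · intro hz
    exact ⟨z, hz, rot_cancel hr (hc z hz)⟩

lemma rot_cancel' {M r b : ℕ} (hr : r ≤ M) (hb : b < M) :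
    ((b + (M - r)) % M + r) % M = b := by
  have h := rot_cancel (r := M - r) (a := b) (Nat.sub_le _ _) hb
  rwa [Nat.sub_sub_self hr] at h

lemma rot_WF {D D' : LCD ℤ} (h : D.WF) (r : ℕ) (hr : r ≤ D.points)
    (hpts : D'.points = D.points)
    (hch : D'.chords = D.chords.image fun c => c.image fun x => (x + r) % D.points) :
    D'.WF := by
  obtain ⟨hbound, hcard, hpart⟩ := h
  set M := D.points with hM
  refine ⟨?_, ?_, ?_⟩
  · intro c' hc' x hx
    rw [hch] at hc'
    obtain ⟨c, hc, rfl⟩ := Finset.mem_image.1 hc'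
    obtain ⟨y, hy, rfl⟩ := Finset.mem_image.1 hx
    have hyM : y < M := hbound c hc y hy
    have hM0 : 0 < M := Nat.pos_of_ne_zero (by omega)
    rw [hpts]
    exact Nat.mod_lt _ hM0
  · intro c' hc'
    rw [hch] at hc'
    obtain ⟨c, hc, rfl⟩ := Finset.mem_image.1 hc'
    rw [Finset.card_image_of_injOn, hcard c hc]
    intro p hp q hq hpq
    have hpM : p < M := hbound c hc p hp
    have hqM : q < M := hbound c hc q hq
    have := congrArg (fun z => (z + (M - r)) % M) hpq
    simpa [rot_cancel hr hpM, rot_cancel hr hqM] using this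
  · intro x hx
    rw [hpts] at hx
    have hM0 : 0 < M := Nat.pos_of_ne_zero (by omega)
    set y := (x + (M - r)) % M with hy
    have hyM : y < M := Nat.mod_lt _ hM0
    obtain ⟨c, ⟨hc, hyc⟩, huniq⟩ := hpart y hyM
    refine ⟨c.image fun z => (z + r) % M, ⟨?_, ?_⟩, ?_⟩
    · rw [hch]; exact Finset.mem_image_of_mem _ hc
    · refine Finset.mem_image.2 ⟨y, hyc, ?_⟩
      rw [hy]; exact rot_cancel' hr hx
    · rintro c'' ⟨hc'', hxc''⟩
      rw [hch] at hc''
      obtain ⟨c₂, hc₂, rfl⟩ := Finset.mem_image.1 hc''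
      obtain ⟨y₂, hy₂, hy₂x⟩ := Finset.mem_image.1 hxc''
      have hy₂M : y₂ < M := hbound c₂ hc₂ y₂ hy₂
      have : y₂ = y := by
        rw [hy, ← hy₂x, rot_cancel hr hy₂M]
      rw [this] at hy₂
      rw [huniq c₂ ⟨hc₂, hy₂⟩]
/-! ### PGD-level auxiliary lemmas -/

lemma idx_eq_rk {m : ℕ} (P : PGD m) (x : Fin (2 * m)) : P.idx x = rk P.preEndpoints x := by
  unfold PGD.idx rk
  congr 1

lemma val_eq_rk_univ {n : ℕ} (x : Fin n) : (x : ℕ) = rk (Finset.univ : Finset (Fin n)) x := by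
  unfold rk
  have : ((Finset.univ : Finset (Fin n)).filter fun y => y < x).image Fin.val
      = Finset.range x.val := by
    ext k
    simp only [Finset.mem_image, Finset.mem_filter, Finset.mem_univ, true_and,
      Finset.mem_range]
    constructor
    · rintro ⟨y, hy, rfl⟩; exact hy
    · intro hk
      exact ⟨⟨k, lt_trans hk x.isLt⟩, by simpa [Fin.lt_def] using hk, rfl⟩
  have hcard := congrArg Finset.card this
  rw [Finset.card_image_of_injOn (fun a _ b _ h => Fin.val_injective h),
    Finset.card_range] at hcard
  omega

lemma ren_eq_rk {n : ℕ} (E : Finset (Fin n)) (x : Fin n) :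
    ren E x = rk (Finset.univ \ E) x := by
  have hdisj : Disjoint E (Finset.univ \ E) := Finset.disjoint_sdiff
  have h : rk (Finset.univ : Finset (Fin n)) x = rk E x + rk (Finset.univ \ E) x := by
    unfold rk
    rw [← Finset.card_union_of_disjoint (Finset.disjoint_filter_filter hdisj),
      ← Finset.filter_union, Finset.union_sdiff_of_subset (Finset.subset_univ E)]
  have hx := val_eq_rk_univ x
  unfold ren
  have hEeq : (E.filter fun y => y < x).card = rk E x := by unfold rk; congr 1
  omega

lemma mem_preEndpoints_iff {m : ℕ} (P : PGD m) (x : Fin (2 * m)) :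
    x ∈ P.preEndpoints ↔ ∃ c ∈ P.pre, x ∈ c := by
  unfold PGD.preEndpoints
  simp [Finset.mem_sup]

lemma pre_subset_PE {m : ℕ} (P : PGD m) {c : Finset (Fin (2 * m))} (hc : c ∈ P.pre) :
    c ⊆ P.preEndpoints := fun x hx => (mem_preEndpoints_iff P x).2 ⟨c, hc, hx⟩

lemma chords_unique {m : ℕ} (P : PGD m) {c d : Finset (Fin (2 * m))}
    (hc : c ∈ P.chords) (hd : d ∈ P.chords) {x : Fin (2 * m)} (hxc : x ∈ c) (hxd : x ∈ d) :
    c = d := by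
  obtain ⟨e, -, huniq⟩ := P.partition x
  rw [huniq c ⟨hc, hxc⟩, huniq d ⟨hd, hxd⟩]

lemma Imap_WF {m : ℕ} (P : PGD m) : P.Imap.WF := by
  have hidx : ∀ x, P.idx x = rk P.preEndpoints x := idx_eq_rk P
  refine ⟨?_, ?_, ?_⟩
  · intro c' hc' x hx
    obtain ⟨c, hc, rfl⟩ := Finset.mem_image.1 hc'
    obtain ⟨y, hy, rfl⟩ := Finset.mem_image.1 hx
    have hyPE : y ∈ P.preEndpoints := pre_subset_PE P hc hy
    rw [hidx]
    exact rk_lt_card hyPE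
  · intro c' hc'
    obtain ⟨c, hc, rfl⟩ := Finset.mem_image.1 hc'
    rw [Finset.card_image_of_injOn, P.two_mem c (P.pre_sub hc)]
    intro p hp q hq hpq
    rw [hidx, hidx] at hpq
    exact rk_injOn (pre_subset_PE P hc hp) (pre_subset_PE P hc hq) hpq
  · intro k hk
    obtain ⟨x, hxPE, hxk⟩ := rk_surj hk
    obtain ⟨c, hc, hxc⟩ := (mem_preEndpoints_iff P x).1 hxPE
    refine ⟨c.image P.idx, ⟨Finset.mem_image_of_mem _ hc, ?_⟩, ?_⟩
    · exact Finset.mem_image.2 ⟨x, hxc, by rw [hidx]; exact hxk⟩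
    · rintro d' ⟨hd', hkd'⟩
      obtain ⟨d, hd, rfl⟩ := Finset.mem_image.1 hd'
      obtain ⟨y, hy, hyk⟩ := Finset.mem_image.1 hkd'
      have hyx : y = x := by
        rw [hidx] at hyk
        exact rk_injOn (pre_subset_PE P hd hy) hxPE (by rw [hyk, hxk])
      rw [hyx] at hy
      rw [chords_unique P (P.pre_sub hd) (P.pre_sub hc) hy hxc]

lemma Imap_label_image {m : ℕ} (P : PGD m) {c₀ : Finset (Fin (2 * m))} (hc₀ : c₀ ∈ P.pre) :
    P.Imap.label (c₀.image P.idx) = P.iLabel c₀ := by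
  have hfilter : P.pre.filter (fun c => c.image P.idx = c₀.image P.idx) = {c₀} := by
    ext c
    simp only [Finset.mem_filter, Finset.mem_singleton]
    constructor
    · rintro ⟨hc, heq⟩
      refine image_eq_of_image_eq (f := P.idx) (S := P.preEndpoints) ?_
        (pre_subset_PE P hc) (pre_subset_PE P hc₀) heq
      intro x hx y hy hxy
      rw [idx_eq_rk, idx_eq_rk] at hxy
      exact rk_injOn hx hy hxy
    · rintro rfl
      exact ⟨hc₀, rfl⟩
  show (∑ c ∈ P.pre.filter (fun c => c.image P.idx = c₀.image P.idx), P.iLabel c) = _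
  rw [hfilter, Finset.sum_singleton]

/-- `I` is invariant under the pseudo-Reidemeister 1 move: if
`P'` (with `m+1` crossings) has a prechord `{t, t+1}` with cyclically adjacent
endpoints, and deleting it together with its two endpoints (renumbering the
remaining `2m` points in cyclic order) yields `P`, then `I(P')` and `I(P)` are
equivalent `ℤ`-labeled chord diagrams. -/
theorem Imap_invariant_PR1 {m : ℕ} (P' : PGD (m + 1)) (P : PGD m)
    (t : Fin (2 * (m + 1)))
    (hpre : ({t, csucc t} : Finset (Fin (2 * (m + 1)))) ∈ P'.pre)
    (hred : Reduces P' {({t, csucc t} : Finset (Fin (2 * (m + 1))))} P) :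
    LCDEquiv P'.Imap P.Imap := by
  classical
  obtain ⟨hsubR, hfor, hback⟩ := hred
  set E : Finset (Fin (2 * (m + 1))) := {t, csucc t} with hE
  simp only [Finset.sup_singleton, id_eq, Finset.mem_singleton] at hfor hback
  -- basic facts about t, csucc t, E
  have hscases : ((csucc t).val = t.val + 1 ∧ t.val + 1 < 2 * (m + 1)) ∨
      ((csucc t).val = 0 ∧ t.val + 1 = 2 * (m + 1)) := by
    rcases lt_or_ge (t.val + 1) (2 * (m + 1)) with h | h
    · exact Or.inl ⟨by simp [csucc, Nat.mod_eq_of_lt h], h⟩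
    · have ht := t.isLt
      have heq : t.val + 1 = 2 * (m + 1) := by omega
      exact Or.inr ⟨by simp [csucc, heq], heq⟩
  have hts : t ≠ csucc t := by
    intro h
    have hv := congrArg Fin.val h
    rcases hscases with ⟨h1, h2⟩ | ⟨h1, h2⟩ <;> omega
  have hEcard : E.card = 2 := by rw [hE]; exact Finset.card_pair hts
  have hEchord : E ∈ P'.chords := P'.pre_sub hpre
  have hmemE : ∀ x : Fin (2 * (m + 1)), x ∈ E ↔ (x = t ∨ x = csucc t) := by
    intro x; rw [hE]; simp
  have hnotE : ∀ c ∈ P'.chords, c ≠ E → ∀ x ∈ c, x ∉ E := by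
    intro c hc hne x hxc hxE
    exact hne (chords_unique P' hc hEchord hxc hxE)
  have hrenmono : ∀ x y : Fin (2 * (m + 1)), x ∉ E → y ∉ E →
      (ren E x < ren E y ↔ x < y) := by
    intro x y hx hy
    rw [ren_eq_rk, ren_eq_rk]
    exact rk_lt_iff (by simp [hx])
  have hreninj : ∀ x y : Fin (2 * (m + 1)), x ∉ E → y ∉ E → ren E x = ren E y → x = y := by
    intro x y hx hy h
    rcases lt_trichotomy x y with hl | he | hl
    · exact absurd h (ne_of_lt ((hrenmono x y hx hy).2 hl))
    · exact he
    · exact absurd h.symm (ne_of_lt ((hrenmono y x hy hx).2 hl))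
  -- the chord correspondence
  have hforall : ∀ c : Finset (Fin (2 * (m + 1))), ∃ c' : Finset (Fin (2 * m)),
      (c ∈ P'.chords ∧ c ≠ E) →
        (c' ∈ P.chords ∧ c.image (ren E) = c'.image Fin.val ∧
         (c ∈ P'.pre ↔ c' ∈ P.pre) ∧ P'.sign c = P.sign c') := by
    intro c
    by_cases h : c ∈ P'.chords ∧ c ≠ E
    · obtain ⟨c', hc', h1, h2, h3⟩ := hfor c h.1 h.2
      exact ⟨c', fun _ => ⟨hc', h1, h2, h3⟩⟩
    · exact ⟨∅, fun hh => absurd hh h⟩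
  choose F hF using hforall
  have hvalinj : ∀ a b : Finset (Fin (2 * m)), a.image Fin.val = b.image Fin.val → a = b :=
    fun a b h => Finset.image_injective Fin.val_injective h
  have hFsurj : ∀ c' ∈ P.chords, ∃ c, c ∈ P'.chords ∧ c ≠ E ∧ F c = c' := by
    intro c' hc'
    obtain ⟨c, hc, hcR, him⟩ := hback c' hc'
    refine ⟨c, hc, hcR, ?_⟩
    exact hvalinj _ _ (by rw [← (hF c ⟨hc, hcR⟩).2.1, him])
  have hΦinj : ∀ a ∈ P'.chords, ∀ b ∈ P'.chords, a ≠ E → b ≠ E →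
      a.image (ren E) = b.image (ren E) → a = b := by
    intro a ha b hb hane hbne h
    refine image_eq_of_image_eq (f := ren E) (S := Finset.univ \ E) ?_ ?_ ?_ h
    · intro x hx y hy hxy
      exact hreninj x y (Finset.mem_sdiff.1 hx).2 (Finset.mem_sdiff.1 hy).2 hxy
    · intro x hx; exact Finset.mem_sdiff.2 ⟨Finset.mem_univ x, hnotE a ha hane x hx⟩
    · intro x hx; exact Finset.mem_sdiff.2 ⟨Finset.mem_univ x, hnotE b hb hbne x hx⟩
  have hFinj : ∀ a ∈ P'.chords, ∀ b ∈ P'.chords, a ≠ E → b ≠ E → F a = F b → a = b := by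
    intro a ha b hb hane hbne h
    exact hΦinj a ha b hb hane hbne
      (by rw [(hF a ⟨ha, hane⟩).2.1, (hF b ⟨hb, hbne⟩).2.1, h])
  -- interlacement transport
  have hint : ∀ c ∈ P'.chords, ∀ d ∈ P'.chords, c ≠ E → d ≠ E →
      (Interlaced c d ↔ Interlaced (F c) (F d)) := by
    intro c hc d hd hcne hdne
    have hu : ∀ x ∈ c ∪ d, ∀ y ∈ c ∪ d, (ren E x < ren E y ↔ x < y) := by
      intro x hx y hy
      have hx' : x ∉ E := by
        rcases Finset.mem_union.1 hx with h | h
        exacts [hnotE c hc hcne x h, hnotE d hd hdne x h]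
      have hy' : y ∉ E := by
        rcases Finset.mem_union.1 hy with h | h
        exacts [hnotE c hc hcne y h, hnotE d hd hdne y h]
      exact hrenmono x y hx' hy'
    have h1 := interlaced_map (ren E) hu
    have hu2 : ∀ x ∈ (F c) ∪ (F d), ∀ y ∈ (F c) ∪ (F d), ((x : ℕ) < (y : ℕ) ↔ x < y) :=
      fun x _ y _ => Iff.rfl
    have h2 := interlaced_map Fin.val hu2
    rw [h1, (hF c ⟨hc, hcne⟩).2.1, (hF d ⟨hd, hdne⟩).2.1, ← h2]
  -- iLabel transport
  have hiLabel : ∀ c ∈ P'.pre, c ≠ E → P'.iLabel c = P.iLabel (F c) := by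
    intro c hcpre hcne
    have hc : c ∈ P'.chords := P'.pre_sub hcpre
    unfold PGD.iLabel
    refine Finset.sum_bij (fun d _ => F d) ?_ ?_ ?_ ?_
    · intro d hd
      simp only [PGD.classicalChords, Finset.mem_filter, Finset.mem_sdiff] at hd ⊢
      obtain ⟨⟨hdch, hdnp⟩, hdint⟩ := hd
      have hdne : d ≠ E := fun h => hdnp (h ▸ hpre)
      have h1 := hF d ⟨hdch, hdne⟩
      exact ⟨⟨h1.1, fun hh => hdnp (h1.2.2.1.2 hh)⟩, (hint c hc d hdch hcne hdne).1 hdint⟩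
    · intro d1 hd1 d2 hd2 h
      simp only [PGD.classicalChords, Finset.mem_filter, Finset.mem_sdiff] at hd1 hd2
      have hd1ne : d1 ≠ E := fun hh => hd1.1.2 (hh ▸ hpre)
      have hd2ne : d2 ≠ E := fun hh => hd2.1.2 (hh ▸ hpre)
      exact hFinj d1 hd1.1.1 d2 hd2.1.1 hd1ne hd2ne h
    · intro d' hd'
      simp only [PGD.classicalChords, Finset.mem_filter, Finset.mem_sdiff] at hd'
      obtain ⟨⟨hd'ch, hd'np⟩, hd'int⟩ := hd'
      obtain ⟨d, hdch, hdne, hFd⟩ := hFsurj d' hd'ch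
      have h1 := hF d ⟨hdch, hdne⟩
      have hdnp : d ∉ P'.pre := fun hh => hd'np (hFd ▸ h1.2.2.1.1 hh)
      refine ⟨d, ?_, hFd⟩
      simp only [PGD.classicalChords, Finset.mem_filter, Finset.mem_sdiff]
      exact ⟨⟨hdch, hdnp⟩, (hint c hc d hdch hcne hdne).2 (hFd ▸ hd'int)⟩
    · intro d hd
      simp only [PGD.classicalChords, Finset.mem_filter, Finset.mem_sdiff] at hd
      have hdne : d ≠ E := fun hh => hd.1.2 (hh ▸ hpre)
      exact (hF d ⟨hd.1.1, hdne⟩).2.2.2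
  -- the label of the deleted chord vanishes
  have hiE : P'.iLabel E = 0 := by
    unfold PGD.iLabel
    have hempty : P'.classicalChords.filter (fun d => Interlaced E d) = ∅ := by
      rw [Finset.filter_eq_empty_iff]
      intro d hd
      simp only [PGD.classicalChords, Finset.mem_sdiff] at hd
      have hdne : d ≠ E := fun h => hd.2 (h ▸ hpre)
      have hdE := hnotE d hd.1 hdne
      have hdcard : d.card = 2 := P'.two_mem d hd.1
      rintro ⟨a, b, hab, hEab, hcard⟩
      have hdx : ∀ x ∈ d, x.val ≠ t.val ∧ x.val ≠ (csucc t).val := by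
        intro x hx
        have hxE := hdE x hx
        constructor <;> intro h <;> apply hxE <;> rw [hmemE]
        · exact Or.inl (Fin.ext h)
        · exact Or.inr (Fin.ext h)
      have haE : a = t ∨ a = csucc t := (hmemE a).1 (by rw [hEab]; simp)
      have hbE : b = t ∨ b = csucc t := (hmemE b).1 (by rw [hEab]; simp)
      have hab' : (a = t ∧ b = csucc t) ∨ (a = csucc t ∧ b = t) := by
        rcases haE with rfl | rfl
        · rcases hbE with rfl | rfl
          · exact absurd rfl hab
          · exact Or.inl ⟨rfl, rfl⟩
        · rcases hbE with rfl | rfl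
          · exact Or.inr ⟨rfl, rfl⟩
          · exact absurd rfl hab
      rcases hscases with ⟨hsv, hlt⟩ | ⟨hsv, heq⟩
      · rcases hab' with ⟨rfl, rfl⟩ | ⟨rfl, rfl⟩
        · -- interval (t, t+1) is empty
          have : d.filter (fun x => CycBtw a x (csucc a)) = ∅ := by
            rw [Finset.filter_eq_empty_iff]
            intro x _
            unfold CycBtw
            rw [if_pos (show a < csucc a from by rw [Fin.lt_def]; omega)]
            rintro ⟨h1, h2⟩
            rw [Fin.lt_def] at h1 h2
            omega
          rw [this] at hcard
          simp at hcard
        · -- everything is in the interval (t+1, t)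
          have : d.filter (fun x => CycBtw (csucc b) x b) = d := by
            apply Finset.filter_true_of_mem
            intro x hx
            obtain ⟨hx1, hx2⟩ := hdx x hx
            unfold CycBtw
            rw [if_neg (show ¬ csucc b < b from by rw [Fin.lt_def]; omega)]
            rw [Fin.lt_def, Fin.lt_def]
            omega
          rw [this, hdcard] at hcard
          omega
      · rcases hab' with ⟨rfl, rfl⟩ | ⟨rfl, rfl⟩
        · have : d.filter (fun x => CycBtw a x (csucc a)) = ∅ := by
            rw [Finset.filter_eq_empty_iff]
            intro x _
            have hxlt := x.isLt
            unfold CycBtw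
            rw [if_neg (show ¬ a < csucc a from by rw [Fin.lt_def]; omega)]
            rw [Fin.lt_def, Fin.lt_def]
            omega
          rw [this] at hcard
          simp at hcard
        · have : d.filter (fun x => CycBtw (csucc b) x b) = d := by
            apply Finset.filter_true_of_mem
            intro x hx
            obtain ⟨hx1, hx2⟩ := hdx x hx
            have hxlt := x.isLt
            unfold CycBtw
            rw [if_pos (show csucc b < b from by rw [Fin.lt_def]; omega)]
            rw [Fin.lt_def, Fin.lt_def]
            omega
          rw [this, hdcard] at hcard
          omega
    rw [hempty, Finset.sum_empty]
  -- endpoints bookkeeping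
  have hEsubPE : E ⊆ P'.preEndpoints := pre_subset_PE P' hpre
  have hPEdiff : (P'.preEndpoints \ E).image (ren E) = P.preEndpoints.image Fin.val := by
    ext z
    simp only [Finset.mem_image]
    constructor
    · rintro ⟨x, hx, rfl⟩
      obtain ⟨hxPE, hxE⟩ := Finset.mem_sdiff.1 hx
      obtain ⟨c, hcpre, hxc⟩ := (mem_preEndpoints_iff P' x).1 hxPE
      have hcne : c ≠ E := fun h => hxE (h ▸ hxc)
      have h1 := hF c ⟨P'.pre_sub hcpre, hcne⟩
      have hmem : ren E x ∈ (F c).image Fin.val := by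
        rw [← h1.2.1]; exact Finset.mem_image_of_mem _ hxc
      obtain ⟨x', hx', hval⟩ := Finset.mem_image.1 hmem
      exact ⟨x', pre_subset_PE P (h1.2.2.1.1 hcpre) hx', hval⟩
    · rintro ⟨x', hx', rfl⟩
      obtain ⟨c', hc'pre, hxc'⟩ := (mem_preEndpoints_iff P x').1 hx'
      obtain ⟨c, hcch, hcne, hFc⟩ := hFsurj c' (P.pre_sub hc'pre)
      have h1 := hF c ⟨hcch, hcne⟩
      have hcpre : c ∈ P'.pre := h1.2.2.1.2 (hFc ▸ hc'pre)
      have hmem : (x' : ℕ) ∈ c.image (ren E) := by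
        rw [h1.2.1, hFc]; exact Finset.mem_image_of_mem _ hxc'
      obtain ⟨x, hx, hren⟩ := Finset.mem_image.1 hmem
      exact ⟨x, Finset.mem_sdiff.2 ⟨(mem_preEndpoints_iff P' x).2 ⟨c, hcpre, hx⟩,
        hnotE c hcch hcne x hx⟩, hren⟩
  have hNcard : (P'.preEndpoints \ E).card = P.preEndpoints.card := by
    have h1 : ((P'.preEndpoints \ E).image (ren E)).card = (P'.preEndpoints \ E).card :=
      Finset.card_image_of_injOn (fun a ha b hb h =>
        hreninj a b (Finset.mem_sdiff.1 ha).2 (Finset.mem_sdiff.1 hb).2 h)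
    have h2 : (P.preEndpoints.image Fin.val).card = P.preEndpoints.card :=
      Finset.card_image_of_injOn (fun a _ b _ h => Fin.val_injective h)
    rw [← h1, hPEdiff, h2]
  set N := P.preEndpoints.card with hNdef
  have hN' : P'.preEndpoints.card = N + 2 := by
    rw [← Finset.card_sdiff_add_card_eq_card hEsubPE, hNcard, hEcard]
  have hrkPE' : ∀ x, rk P'.preEndpoints x = rk E x + rk (P'.preEndpoints \ E) x := by
    intro x
    unfold rk
    rw [← Finset.card_union_of_disjoint (Finset.disjoint_filter_filter Finset.disjoint_sdiff),
      ← Finset.filter_union, Finset.union_sdiff_of_subset hEsubPE]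
  have hidxsd : ∀ x ∈ P'.preEndpoints \ E, ∀ x' ∈ P.preEndpoints, ren E x = (x' : ℕ) →
      rk (P'.preEndpoints \ E) x = P.idx x' := by
    intro x hx x' hx' hren
    have hmono : ∀ a ∈ P'.preEndpoints \ E, ∀ b ∈ P'.preEndpoints \ E,
        (ren E a < ren E b ↔ a < b) :=
      fun a ha b hb => hrenmono a b (Finset.mem_sdiff.1 ha).2 (Finset.mem_sdiff.1 hb).2
    have h1 := rk_image (ren E) hmono hx
    have hmono2 : ∀ a ∈ P.preEndpoints, ∀ b ∈ P.preEndpoints, ((a : ℕ) < (b : ℕ) ↔ a < b) :=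
      fun a _ b _ => Iff.rfl
    have h2 := rk_image Fin.val hmono2 hx'
    rw [idx_eq_rk, ← h2, ← h1, hPEdiff, hren]
  have hidxfull : ∀ x ∈ P'.preEndpoints \ E, ∀ x' ∈ P.preEndpoints, ren E x = (x' : ℕ) →
      P'.idx x = P.idx x' + rk E x := by
    intro x hx x' hx' h
    rw [idx_eq_rk, hrkPE', hidxsd x hx x' hx' h]
    ring
  -- choose the rotation amounts
  obtain ⟨r, s, hrle, hsle, hEimg, hpoint⟩ :
      ∃ r s : ℕ, r ≤ N + 2 ∧ s ≤ N ∧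
        (E.image P'.idx).image (fun x => (x + r) % (N + 2)) = ({N, N + 1} : Finset ℕ) ∧
        (∀ x ∈ P'.preEndpoints \ E, ∀ x' ∈ P.preEndpoints, ren E x = (x' : ℕ) →
          (P'.idx x + r) % (N + 2) = (P.idx x' + s) % N) := by
    have htE : t ∈ E := (hmemE t).2 (Or.inl rfl)
    have hsE : csucc t ∈ E := (hmemE (csucc t)).2 (Or.inr rfl)
    rcases hscases with ⟨hsv, hlt⟩ | ⟨hsv, heq⟩
    · -- case A : t is not the last point
      set j := rk (P'.preEndpoints \ E) t with hj
      have hjle : j ≤ N := by rw [hj, ← hNcard]; exact rk_le_card _ _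
      have hrkEt : rk E t = 0 := by
        unfold rk
        rw [Finset.filter_eq_empty_iff.2, Finset.card_empty]
        intro y hy
        rcases (hmemE y).1 hy with rfl | rfl <;> rw [Fin.lt_def] <;> omega
      have hrkEs : rk E (csucc t) = 1 := by
        unfold rk
        have heq1 : E.filter (fun y => y < csucc t) = {t} := by
          ext y
          simp only [Finset.mem_filter, Finset.mem_singleton]
          constructor
          · rintro ⟨hy, hlt'⟩
            rcases (hmemE y).1 hy with rfl | rfl
            · rfl
            · rw [Fin.lt_def] at hlt'; omega
          · rintro rfl
            exact ⟨htE, by rw [Fin.lt_def]; omega⟩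
        rw [heq1, Finset.card_singleton]
      have hidxt : P'.idx t = j := by
        rw [idx_eq_rk, hrkPE', hrkEt, hj, Nat.zero_add]
      have hidxs : P'.idx (csucc t) = j + 1 := by
        rw [idx_eq_rk, hrkPE', hrkEs]
        have hch : rk (P'.preEndpoints \ E) (csucc t) = j := by
          rw [hj]
          unfold rk
          congr 1
          apply Finset.filter_congr
          intro y hy
          have hyE := (Finset.mem_sdiff.1 hy).2
          have hyt : y ≠ t := fun h => hyE (h ▸ htE)
          have hyv : y.val ≠ t.val := fun h => hyt (Fin.ext h)
          rw [Fin.lt_def, Fin.lt_def]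
          omega
        rw [hch]
        omega
      refine ⟨N - j, N - j, by omega, by omega, ?_, ?_⟩
      · rw [hE, Finset.image_insert, Finset.image_singleton, hidxt, hidxs,
          Finset.image_insert, Finset.image_singleton]
        have e1 : (j + (N - j)) % (N + 2) = N := by
          rw [show j + (N - j) = N from by omega, Nat.mod_eq_of_lt (by omega)]
        have e2 : (j + 1 + (N - j)) % (N + 2) = N + 1 := by
          rw [show j + 1 + (N - j) = N + 1 from by omega, Nat.mod_eq_of_lt (by omega)]
        rw [e1, e2]
      · intro x hx x' hx' hren
        have hxE := (Finset.mem_sdiff.1 hx).2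
        have hxt : x ≠ t := fun h => hxE (h ▸ htE)
        have hxs : x ≠ csucc t := fun h => hxE (h ▸ hsE)
        have hxvt : x.val ≠ t.val := fun h => hxt (Fin.ext h)
        have hxvs : x.val ≠ (csucc t).val := fun h => hxs (Fin.ext h)
        have hfull := hidxfull x hx x' hx' hren
        have hvN : P.idx x' < N := by rw [idx_eq_rk]; exact rk_lt_card hx'
        rcases Ne.lt_or_gt hxt with hlt' | hgt'
        · have hrkE0 : rk E x = 0 := by
            unfold rk
            rw [Finset.filter_eq_empty_iff.2, Finset.card_empty]
            intro y hy
            rw [Fin.lt_def] at hlt' ⊢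
            rcases (hmemE y).1 hy with rfl | rfl <;> omega
          have hvj : P.idx x' < j := by
            rw [← hidxsd x hx x' hx' hren, hj]
            exact rk_lt_rk hx hlt'
          rw [hfull, hrkE0, Nat.add_zero, Nat.mod_eq_of_lt (by omega),
            Nat.mod_eq_of_lt (by omega)]
        · have hrkE2 : rk E x = 2 := by
            unfold rk
            rw [Finset.filter_true_of_mem, hEcard]
            intro y hy
            rw [Fin.lt_def] at hgt' ⊢
            rcases (hmemE y).1 hy with rfl | rfl <;> omega
          have hvj : j ≤ P.idx x' := by
            rw [← hidxsd x hx x' hx' hren, hj]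
            exact rk_mono _ (le_of_lt hgt')
          rw [hfull, hrkE2]
          rw [show P.idx x' + 2 + (N - j) = (N + 2) + (P.idx x' - j) from by omega,
            show P.idx x' + (N - j) = N + (P.idx x' - j) from by omega,
            Nat.add_mod_left, Nat.add_mod_left, Nat.mod_eq_of_lt (by omega),
            Nat.mod_eq_of_lt (by omega)]
    · -- case B : t is the last point
      have htop : ∀ y : Fin (2 * (m + 1)), y.val ≤ t.val := by
        intro y; have := y.isLt; omega
      have hidxs0 : P'.idx (csucc t) = 0 := by
        rw [idx_eq_rk]
        unfold rk
        rw [Finset.filter_eq_empty_iff.2, Finset.card_empty]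
        intro y _
        rw [Fin.lt_def]
        omega
      have hidxt : P'.idx t = N + 1 := by
        rw [idx_eq_rk]
        unfold rk
        have heq1 : P'.preEndpoints.filter (fun y => y < t) = P'.preEndpoints.erase t := by
          ext y
          simp only [Finset.mem_filter, Finset.mem_erase]
          constructor
          · rintro ⟨hy, hlt'⟩
            exact ⟨fun h => absurd (h ▸ hlt') (lt_irrefl t), hy⟩
          · rintro ⟨hne, hy⟩
            have : y.val ≠ t.val := fun h => hne (Fin.ext h)
            have := htop y
            exact ⟨hy, by rw [Fin.lt_def]; omega⟩
        rw [heq1, Finset.card_erase_of_mem (hEsubPE ((hmemE t).2 (Or.inl rfl))), hN']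
        omega
      refine ⟨N + 1, 0, by omega, by omega, ?_, ?_⟩
      · rw [hE, Finset.image_insert, Finset.image_singleton, hidxt, hidxs0,
          Finset.image_insert, Finset.image_singleton]
        have e1 : (N + 1 + (N + 1)) % (N + 2) = N := by
          rw [show N + 1 + (N + 1) = (N + 2) + N from by omega, Nat.add_mod_left,
            Nat.mod_eq_of_lt (by omega)]
        have e2 : (0 + (N + 1)) % (N + 2) = N + 1 := by
          rw [Nat.zero_add, Nat.mod_eq_of_lt (by omega)]
        rw [e1, e2]
      · intro x hx x' hx' hren
        have hxE := (Finset.mem_sdiff.1 hx).2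
        have hxs : x ≠ csucc t := fun h => hxE (h ▸ hsE)
        have hxvs : x.val ≠ (csucc t).val := fun h => hxs (Fin.ext h)
        have hfull := hidxfull x hx x' hx' hren
        have hvN : P.idx x' < N := by rw [idx_eq_rk]; exact rk_lt_card hx'
        have hrkE1 : rk E x = 1 := by
          unfold rk
          have heq1 : E.filter (fun y => y < x) = {csucc t} := by
            ext y
            simp only [Finset.mem_filter, Finset.mem_singleton]
            constructor
            · rintro ⟨hy, hlt'⟩
              rcases (hmemE y).1 hy with rfl | rfl
              · rw [Fin.lt_def] at hlt'
                have := htop x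
                omega
              · rfl
            · rintro rfl
              refine ⟨hsE, ?_⟩
              rw [Fin.lt_def]
              omega
          rw [heq1, Finset.card_singleton]
        rw [hfull, hrkE1,
          show P.idx x' + 1 + (N + 1) = (N + 2) + P.idx x' from by omega,
          Nat.add_mod_left, Nat.mod_eq_of_lt (show P.idx x' < N + 2 from by omega),
          Nat.add_zero, Nat.mod_eq_of_lt hvN]
  -- chord image compatibility
  have hCimg : ∀ c ∈ P'.pre, c ≠ E →
      (c.image P'.idx).image (fun x => (x + r) % (N + 2)) =
        ((F c).image P.idx).image (fun x => (x + s) % N) := by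
    intro c hcpre hcne
    have hcch := P'.pre_sub hcpre
    have h1 := hF c ⟨hcch, hcne⟩
    have hFcpre : F c ∈ P.pre := h1.2.2.1.1 hcpre
    rw [Finset.image_image, Finset.image_image]
    ext z
    simp only [Finset.mem_image, Function.comp_apply]
    constructor
    · rintro ⟨x, hx, rfl⟩
      have hxd : x ∈ P'.preEndpoints \ E := Finset.mem_sdiff.2
        ⟨(mem_preEndpoints_iff P' x).2 ⟨c, hcpre, hx⟩, hnotE c hcch hcne x hx⟩
      have hmem : ren E x ∈ (F c).image Fin.val := by
        rw [← h1.2.1]; exact Finset.mem_image_of_mem _ hx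
      obtain ⟨x', hx', hval⟩ := Finset.mem_image.1 hmem
      exact ⟨x', hx', (hpoint x hxd x' (pre_subset_PE P hFcpre hx') hval.symm).symm⟩
    · rintro ⟨x', hx', rfl⟩
      have hmem : (x' : ℕ) ∈ c.image (ren E) := by
        rw [h1.2.1]; exact Finset.mem_image_of_mem _ hx'
      obtain ⟨x, hx, hval⟩ := Finset.mem_image.1 hmem
      have hxd : x ∈ P'.preEndpoints \ E := Finset.mem_sdiff.2
        ⟨(mem_preEndpoints_iff P' x).2 ⟨c, hcpre, hx⟩, hnotE c hcch hcne x hx⟩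
      exact ⟨x, hx, hpoint x hxd x' (pre_subset_PE P hFcpre hx') hval⟩
  set T := P.Imap.chords.image (fun c => c.image fun x => (x + s) % N) with hT
  have hTalt : T = P.pre.image (fun c' => (c'.image P.idx).image (fun x => (x + s) % N)) := by
    rw [hT]
    show (P.pre.image _).image _ = _
    rw [Finset.image_image]
    rfl
  have hMpts : P'.Imap.points = N + 2 := hN'
  have hD1chords : P'.Imap.chords.image (fun c => c.image fun x => (x + r) % (N + 2)) =
      insert ({N, N + 1} : Finset ℕ) T := by
    show (P'.pre.image _).image _ = _
    rw [Finset.image_image]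
    rw [← Finset.insert_erase hpre, Finset.image_insert]
    simp only [Function.comp_apply]
    rw [hEimg]
    apply congrArg
    rw [hTalt]
    ext z
    simp only [Finset.mem_image, Function.comp_apply]
    constructor
    · rintro ⟨c, hc, rfl⟩
      have hcpre := Finset.mem_of_mem_erase hc
      have hcne := Finset.ne_of_mem_erase hc
      exact ⟨F c, (hF c ⟨P'.pre_sub hcpre, hcne⟩).2.2.1.1 hcpre,
        (hCimg c hcpre hcne).symm⟩
    · rintro ⟨c', hc', rfl⟩
      obtain ⟨c, hcch, hcne, rfl⟩ := hFsurj c' (P.pre_sub hc')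
      have hcpre : c ∈ P'.pre := (hF c ⟨hcch, hcne⟩).2.2.1.2 hc'
      exact ⟨c, Finset.mem_erase.2 ⟨hcne, hcpre⟩, hCimg c hcpre hcne⟩
  have hWF' : P'.Imap.WF := Imap_WF P'
  have hWFP : P.Imap.WF := Imap_WF P
  have hbound' : ∀ c ∈ P'.Imap.chords, ∀ x ∈ c, x < N + 2 := by
    intro c hc x hx
    have := hWF'.1 c hc x hx
    rwa [hMpts] at this
  set D1 : LCD ℤ := ⟨N + 2, insert ({N, N + 1} : Finset ℕ) T,
    fun c => P'.Imap.label (c.image fun x => (x + ((N + 2) - r)) % (N + 2))⟩ with hD1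
  set D0 : LCD ℤ := ⟨N, T, D1.label⟩ with hD0
  have hWFD1 : D1.WF := by
    refine rot_WF hWF' r ?_ ?_ ?_
    · rw [hMpts]; exact hrle
    · exact hMpts.symm
    · show insert _ T = _
      rw [hMpts]
      exact hD1chords.symm
  have hWFD0 : D0.WF := by
    refine rot_WF hWFP s hsle rfl ?_
    exact hT
  have step1 : LCDStep P'.Imap D1 := by
    refine ⟨hWF', hWFD1, Or.inl ⟨hMpts, r, ?_, ?_⟩⟩
    · show insert _ T = _
      rw [show P'.Imap.points = N + 2 from hMpts]
      exact hD1chords.symm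
    · intro c hc
      show P'.Imap.label _ = P'.Imap.label c
      congr 1
      rw [show P'.Imap.points = N + 2 from hMpts]
      exact image_rot_rot hrle (fun x hx => hbound' c hc x hx)
  have hT_notmem : ({N, N + 1} : Finset ℕ) ∉ T := by
    rw [hT]
    intro hmem
    obtain ⟨c, hc, hceq⟩ := Finset.mem_image.1 hmem
    have hmem2 : N + 1 ∈ c.image (fun x => (x + s) % N) := by rw [hceq]; simp
    obtain ⟨x, hx, hxe⟩ := Finset.mem_image.1 hmem2
    have hxN : x < N := hWFP.1 c hc x hx
    have hN0 : 0 < N := by omega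
    have := Nat.mod_lt (x + s) hN0
    omega
  have hEidxbound : ∀ x ∈ E.image P'.idx, x < N + 2 := by
    intro x hx
    obtain ⟨y, hy, rfl⟩ := Finset.mem_image.1 hx
    rw [idx_eq_rk, ← hN']
    exact rk_lt_card (hEsubPE hy)
  have step2 : LCDStep D0 D1 := by
    refine ⟨hWFD0, hWFD1, Or.inr (Or.inl ⟨rfl, hT_notmem, rfl, ?_, fun c _ => rfl⟩)⟩
    show P'.Imap.label _ = 0
    have hback_img : (({N, N + 1} : Finset ℕ).image fun x => (x + ((N + 2) - r)) % (N + 2))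
        = E.image P'.idx := by
      rw [← hEimg]
      exact image_rot_rot hrle hEidxbound
    rw [hback_img, Imap_label_image P' hpre, hiE]
  have step3 : LCDStep P.Imap D0 := by
    refine ⟨hWFP, hWFD0, Or.inl ⟨rfl, s, hT, ?_⟩⟩
    intro c' hc'
    obtain ⟨c₀', hc₀', rfl⟩ := Finset.mem_image.1 hc'
    obtain ⟨c₀, hch₀, hne₀, hFc₀⟩ := hFsurj c₀' (P.pre_sub hc₀')
    have h1 := hF c₀ ⟨hch₀, hne₀⟩
    have hpre₀ : c₀ ∈ P'.pre := h1.2.2.1.2 (hFc₀ ▸ hc₀')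
    show P'.Imap.label _ = _
    have hidxbound : ∀ x ∈ c₀.image P'.idx, x < N + 2 := by
      intro x hx
      obtain ⟨y, hy, rfl⟩ := Finset.mem_image.1 hx
      rw [idx_eq_rk, ← hN']
      exact rk_lt_card (pre_subset_PE P' hpre₀ hy)
    have himg : (((c₀'.image P.idx)).image fun x => (x + s) % P.Imap.points).image
        (fun x => (x + ((N + 2) - r)) % (N + 2)) = c₀.image P'.idx := by
      rw [show P.Imap.points = N from rfl]
      rw [← hFc₀, ← hCimg c₀ hpre₀ hne₀]
      exact image_rot_rot hrle hidxbound
    rw [himg, Imap_label_image P' hpre₀, Imap_label_image P hc₀',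
      hiLabel c₀ hpre₀ hne₀, hFc₀]
  exact Relation.EqvGen.trans _ _ _
    (Relation.EqvGen.trans _ _ _ (Relation.EqvGen.rel _ _ step1)
      (Relation.EqvGen.symm _ _ (Relation.EqvGen.rel _ _ step2)))
    (Relation.EqvGen.symm _ _ (Relation.EqvGen.rel _ _ step3))
end
end

section
/- The map I is invariant under the Reidemeister 2 move on pseudo-Gauss diagrams: suppose P′ (with m+2 crossings) contains two disjoint pairs of cyclically adjacent points a, a+1 and b, b+1 and two classical chords e₁ = {a, b+1} and e₂ = {a+1, b} with ε(e₁) = −ε(e₂), and suppose that deleting e₁, e₂ together with the four points a, a+1, b, b+1 from P′ (renumbering the remaining 2m points in cyclic order) yields P. Then I(P′) and I(P) are equivalent ℤ-labeled chord diagrams. -/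
/-!
Formalization framework for pseudo-Gauss diagrams (Gauss diagrams of
virtual pseudoknots), the interlacement-based invariants `I` and `I_h`,
and the Gauss-diagrammatic Reidemeister moves.
-/

noncomputable section
open scoped Classical

section R2aux

variable {n : ℕ} {E : Finset (Fin n)}

lemma ren_lt_ren_s4 {x y : Fin n} (hx : x ∉ E) (hxy : x < y) : ren E x < ren E y := by
  have h1 : (E.filter fun e => e < x).card ≤ x.val := by
    have hsub : (E.filter fun e => e < x) ⊆ Finset.Iio x := by
      intro e he
      simp only [Finset.mem_filter] at he
      exact Finset.mem_Iio.2 he.2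
    simpa [Fin.card_Iio] using Finset.card_le_card hsub
  have h2 : (E.filter fun e => e < y) ⊆
      (E.filter fun e => e < x) ∪ (E.filter fun e => x < e ∧ e < y) := by
    intro e he
    simp only [Finset.mem_filter, Finset.mem_union] at he ⊢
    rcases lt_trichotomy e x with h | h | h
    · exact Or.inl ⟨he.1, h⟩
    · exact absurd (h ▸ he.1) hx
    · exact Or.inr ⟨he.1, h, he.2⟩
  have h3 : (E.filter fun e => x < e ∧ e < y).card ≤ y.val - x.val - 1 := by
    have hsub : (E.filter fun e => x < e ∧ e < y) ⊆ Finset.Ioo x y := by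
      intro e he
      simp only [Finset.mem_filter] at he
      exact Finset.mem_Ioo.2 he.2
    simpa [Fin.card_Ioo] using Finset.card_le_card hsub
  have h4 := (Finset.card_le_card h2).trans (Finset.card_union_le _ _)
  have hv : x.val < y.val := hxy
  unfold ren
  omega

lemma ren_lt_iff {x y : Fin n} (hx : x ∉ E) (hy : y ∉ E) :
    ren E x < ren E y ↔ x < y := by
  constructor
  · intro h
    by_contra hc
    push_neg at hc
    rcases lt_or_eq_of_le hc with h' | h'
    · exact absurd h (not_lt.2 (le_of_lt (ren_lt_ren_s4 hy h')))
    · subst h'; exact lt_irrefl _ h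
  · exact ren_lt_ren_s4 hx

lemma ren_inj {x y : Fin n} (hx : x ∉ E) (hy : y ∉ E) (h : ren E x = ren E y) :
    x = y := by
  rcases lt_trichotomy x y with h' | h' | h'
  · exact absurd h (ne_of_lt (ren_lt_ren_s4 hx h'))
  · exact h'
  · exact absurd h.symm (ne_of_lt (ren_lt_ren_s4 hy h'))

def NatCycBtw (a x b : ℕ) : Prop := if a < b then a < x ∧ x < b else x < b ∨ a < x

lemma cycBtw_iff (p x q : Fin n) :
    CycBtw p x q ↔ NatCycBtw p.val x.val q.val := by
  unfold CycBtw NatCycBtw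
  by_cases h : p < q
  · rw [if_pos h, if_pos (Fin.lt_def.mp h)]
    exact and_congr Fin.lt_def Fin.lt_def
  · rw [if_neg h, if_neg (fun hc => h (Fin.lt_def.mpr hc))]
    exact or_congr Fin.lt_def Fin.lt_def

lemma natCycBtw_congr {a x b a' x' b' : ℕ} (h1 : a < b ↔ a' < b')
    (h2 : a < x ↔ a' < x') (h3 : x < b ↔ x' < b') :
    NatCycBtw a x b ↔ NatCycBtw a' x' b' := by
  unfold NatCycBtw
  by_cases h : a < b
  · rw [if_pos h, if_pos (h1.mp h)]
    exact and_congr h2 h3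
  · rw [if_neg h, if_neg (fun hc => h (h1.mpr hc))]
    exact or_congr h3 h2

lemma natCycBtw_succ {n p x q : ℕ} (hp : p < n) (hq : q < n) (hx : x < n)
    (hpx : p ≠ x) (hqx : q ≠ x) (hpx' : p ≠ (x + 1) % n) (hqx' : q ≠ (x + 1) % n) :
    (NatCycBtw p x q ↔ NatCycBtw p ((x + 1) % n) q) := by
  rcases Nat.lt_or_ge (x + 1) n with h | h
  · rw [Nat.mod_eq_of_lt h] at hpx' hqx' ⊢
    unfold NatCycBtw
    split_ifs <;> omega
  · have hx1 : (x + 1) % n = 0 := by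
      have : x + 1 = n := by omega
      simp [this]
    rw [hx1] at hpx' hqx' ⊢
    have hxn : x = n - 1 := by omega
    unfold NatCycBtw
    split_ifs <;> omega

lemma cycBtw_csucc {p q x : Fin n} (hp : p ≠ x) (hp' : p ≠ csucc x)
    (hq : q ≠ x) (hq' : q ≠ csucc x) :
    CycBtw p x q ↔ CycBtw p (csucc x) q := by
  rw [cycBtw_iff, cycBtw_iff]
  have hc : (csucc x).val = (x.val + 1) % n := rfl
  rw [hc]
  exact natCycBtw_succ p.isLt q.isLt x.isLt
    (fun h => hp (Fin.val_injective h))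
    (fun h => hq (Fin.val_injective h))
    (fun h => hp' (Fin.val_injective (h.trans hc.symm)))
    (fun h => hq' (Fin.val_injective (h.trans hc.symm)))

end R2aux

/-- `I` is invariant under the Reidemeister 2 move: if `P'`
(with `m+2` crossings) contains disjoint pairs of cyclically adjacent points
`a, a+1` and `b, b+1` and classical chords `e₁ = {a, b+1}`, `e₂ = {a+1, b}` with
`ε(e₁) = -ε(e₂)`, and deleting `e₁, e₂` together with the four points
(renumbering the remaining `2m` points in cyclic order) yields `P`, then
`I(P')` and `I(P)` are equivalent `ℤ`-labeled chord diagrams. -/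
theorem Imap_invariant_R2 {m : ℕ} (P' : PGD (m + 2)) (P : PGD m)
    (a b : Fin (2 * (m + 2)))
    (hdisj : Disjoint ({a, csucc a} : Finset (Fin (2 * (m + 2)))) {b, csucc b})
    (he₁ : ({a, csucc b} : Finset (Fin (2 * (m + 2)))) ∈ P'.classicalChords)
    (he₂ : ({csucc a, b} : Finset (Fin (2 * (m + 2)))) ∈ P'.classicalChords)
    (hsign : P'.sign {a, csucc b} = -P'.sign {csucc a, b})
    (hred : Reduces P'
      {({a, csucc b} : Finset (Fin (2 * (m + 2)))), {csucc a, b}} P) :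
    LCDEquiv P'.Imap P.Imap := by
  classical
  set e₁ : Finset (Fin (2 * (m + 2))) := {a, csucc b} with he₁def
  set e₂ : Finset (Fin (2 * (m + 2))) := {csucc a, b} with he₂def
  set R : Finset (Finset (Fin (2 * (m + 2)))) := {e₁, e₂} with hRdef
  obtain ⟨hRsub, h2, h3⟩ := hred
  set Es : Finset (Fin (2 * (m + 2))) := R.sup id with hEsdef
  set f : Fin (2 * (m + 2)) → ℕ := ren Es with hfdef
  -- basic membership facts
  have he₁' : e₁ ∈ P'.chords ∧ e₁ ∉ P'.pre := by
    simpa [PGD.classicalChords, Finset.mem_sdiff] using he₁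
  have he₂' : e₂ ∈ P'.chords ∧ e₂ ∉ P'.pre := by
    simpa [PGD.classicalChords, Finset.mem_sdiff] using he₂
  have hmemE : ∀ x : Fin (2 * (m + 2)), x ∈ Es ↔ x ∈ e₁ ∨ x ∈ e₂ := by
    intro x
    rw [hEsdef, hRdef]
    simp [Finset.mem_sup]
  have hne_cs : ∀ x : Fin (2 * (m + 2)), x ≠ csucc x := by
    intro x h
    have hv := congrArg Fin.val h
    simp only [csucc] at hv
    have hlt := x.isLt
    rcases Nat.lt_or_ge (x.val + 1) (2 * (m + 2)) with h' | h'
    · rw [Nat.mod_eq_of_lt h'] at hv; omega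
    · have hx1 : x.val + 1 = 2 * (m + 2) := by omega
      rw [hx1, Nat.mod_self] at hv; omega
  have hd := Finset.disjoint_left.mp hdisj
  have hab : a ≠ b ∧ a ≠ csucc b ∧ csucc a ≠ b ∧ csucc a ≠ csucc b := by
    have h1 := hd (Finset.mem_insert_self a {csucc a})
    have h2' := hd (Finset.mem_insert_of_mem (Finset.mem_singleton_self (csucc a)))
    simp only [Finset.mem_insert, Finset.mem_singleton, not_or] at h1 h2'
    exact ⟨h1.1, h1.2, h2'.1, h2'.2⟩
  have hacb : a ≠ csucc b := hab.2.1
  have hcab : csucc a ≠ b := hab.2.2.1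
  have he12 : e₁ ≠ e₂ := by
    intro h
    have ha2 : a ∈ e₂ := h ▸ Finset.mem_insert_self a {csucc b}
    rw [he₂def] at ha2
    rcases Finset.mem_insert.mp ha2 with h' | h'
    · exact hne_cs a h'
    · exact hab.1 (Finset.mem_singleton.mp h')
  have hR_e₁ : e₁ ∈ R := Finset.mem_insert_self _ _
  have hR_e₂ : e₂ ∈ R := Finset.mem_insert_of_mem (Finset.mem_singleton_self _)
  have havoid : ∀ c ∈ P'.chords, c ∉ R → ∀ x ∈ c, x ∉ Es := by
    intro c hc hcR x hxc hxE
    rw [hmemE] at hxE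
    obtain ⟨u, ⟨hu1, hu2⟩, huniq⟩ := P'.partition x
    rcases hxE with hx1 | hx2
    · have heq : c = e₁ := (huniq c ⟨hc, hxc⟩).trans (huniq e₁ ⟨he₁'.1, hx1⟩).symm
      exact hcR (heq ▸ hR_e₁)
    · have heq : c = e₂ := (huniq c ⟨hc, hxc⟩).trans (huniq e₂ ⟨he₂'.1, hx2⟩).symm
      exact hcR (heq ▸ hR_e₂)
  have hpre_nR : ∀ c ∈ P'.pre, c ∉ R := by
    intro c hc hcR
    rcases Finset.mem_insert.mp hcR with h | h
    · exact he₁'.2 (h ▸ hc)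
    · exact he₂'.2 ((Finset.mem_singleton.mp h) ▸ hc)
  have hpre_avoid : ∀ c ∈ P'.pre, ∀ x ∈ c, x ∉ Es :=
    fun c hc => havoid c (P'.pre_sub hc) (hpre_nR c hc)
  -- the correspondence φ
  set φ : Finset (Fin (2 * (m + 2))) → Finset (Fin (2 * m)) := fun c =>
    if h : c ∈ P'.chords ∧ c ∉ R then (h2 c h.1 h.2).choose else ∅ with hφdef
  have hφspec : ∀ c, ∀ _ : c ∈ P'.chords, ∀ _ : c ∉ R,
      φ c ∈ P.chords ∧ c.image f = (φ c).image Fin.val ∧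
      (c ∈ P'.pre ↔ φ c ∈ P.pre) ∧ P'.sign c = P.sign (φ c) := by
    intro c hc hcR
    have hy : φ c = (h2 c hc hcR).choose := by
      rw [hφdef]
      exact dif_pos ⟨hc, hcR⟩
    obtain ⟨h1, hh2, h3', h4⟩ := (h2 c hc hcR).choose_spec
    rw [hy]
    exact ⟨h1, hh2, h3', h4⟩
  have hval_inj : ∀ s t : Finset (Fin (2 * m)),
      s.image Fin.val = t.image Fin.val → s = t :=
    fun s t h => Finset.image_injective Fin.val_injective h
  have hfim_inj : ∀ c d : Finset (Fin (2 * (m + 2))),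
      (∀ x ∈ c, x ∉ Es) → (∀ x ∈ d, x ∉ Es) → c.image f = d.image f → c = d := by
    intro c d hc hdav h
    apply Finset.Subset.antisymm
    · intro x hx
      have hm : f x ∈ d.image f := h ▸ Finset.mem_image_of_mem f hx
      obtain ⟨y, hy, hfy⟩ := Finset.mem_image.mp hm
      exact (ren_inj (hdav y hy) (hc x hx) hfy) ▸ hy
    · intro x hx
      have hm : f x ∈ c.image f := h ▸ Finset.mem_image_of_mem f hx
      obtain ⟨y, hy, hfy⟩ := Finset.mem_image.mp hm
      exact (ren_inj (hc y hy) (hdav x hx) hfy) ▸ hy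
  have hφinj : ∀ c₁, c₁ ∈ P'.chords → c₁ ∉ R → ∀ c₂, c₂ ∈ P'.chords → c₂ ∉ R →
      φ c₁ = φ c₂ → c₁ = c₂ := by
    intro c₁ hc1 h1R c₂ hc2 h2R heq
    have s1 := hφspec c₁ hc1 h1R
    have s2 := hφspec c₂ hc2 h2R
    apply hfim_inj _ _ (havoid _ hc1 h1R) (havoid _ hc2 h2R)
    rw [s1.2.1, s2.2.1, heq]
  have hφsurj : ∀ c' ∈ P.chords, ∃ c, (c ∈ P'.chords ∧ c ∉ R) ∧ φ c = c' := by
    intro c' hc'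
    obtain ⟨c, hc, hcR, him⟩ := h3 c' hc'
    exact ⟨c, ⟨hc, hcR⟩, hval_inj _ _ (((hφspec c hc hcR).2.1).symm.trans him)⟩
  -- prechord endpoints
  have hpe_avoid : ∀ x ∈ P'.preEndpoints, x ∉ Es := by
    intro x hx
    have hx' : x ∈ P'.pre.sup id := hx
    obtain ⟨c, hc, hxc⟩ := Finset.mem_sup.mp hx'
    exact hpre_avoid c hc x hxc
  have hpe_im : P'.preEndpoints.image f = P.preEndpoints.image Fin.val := by
    ext j
    simp only [Finset.mem_image]
    constructor
    · rintro ⟨x, hx, rfl⟩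
      have hx' : x ∈ P'.pre.sup id := hx
      obtain ⟨c, hc, hxc⟩ := Finset.mem_sup.mp hx'
      have spec := hφspec c (P'.pre_sub hc) (hpre_nR c hc)
      have hm : f x ∈ (φ c).image Fin.val := spec.2.1 ▸ Finset.mem_image_of_mem f hxc
      obtain ⟨x', hx'c, hvx⟩ := Finset.mem_image.mp hm
      refine ⟨x', ?_, hvx⟩
      show x' ∈ P.pre.sup id
      exact Finset.mem_sup.mpr ⟨φ c, spec.2.2.1.mp hc, hx'c⟩
    · rintro ⟨x', hx', rfl⟩
      have hx'' : x' ∈ P.pre.sup id := hx'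
      obtain ⟨c', hc', hx'c⟩ := Finset.mem_sup.mp hx''
      obtain ⟨c, ⟨hc, hcR⟩, rfl⟩ := hφsurj c' (P.pre_sub hc')
      have spec := hφspec c hc hcR
      have hm : x'.val ∈ c.image f := by
        rw [spec.2.1]; exact Finset.mem_image_of_mem _ hx'c
      obtain ⟨x, hxc, hfx⟩ := Finset.mem_image.mp hm
      refine ⟨x, ?_, hfx⟩
      show x ∈ P'.pre.sup id
      exact Finset.mem_sup.mpr ⟨c, spec.2.2.1.mpr hc', hxc⟩
  have hpts : P'.preEndpoints.card = P.preEndpoints.card := by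
    have hA : (P'.preEndpoints.image f).card = P'.preEndpoints.card :=
      Finset.card_image_of_injOn
        (fun x hx y hy h => ren_inj (hpe_avoid x hx) (hpe_avoid y hy) h)
    have hB : (P.preEndpoints.image Fin.val).card = P.preEndpoints.card :=
      Finset.card_image_of_injOn (fun x _ y _ h => Fin.val_injective h)
    rw [← hA, hpe_im, hB]
  -- idx correspondence
  have hidx : ∀ x : Fin (2 * (m + 2)), x ∉ Es → ∀ x' : Fin (2 * m),
      x'.val = f x → P'.idx x = P.idx x' := by
    intro x hx x' hvx
    unfold PGD.idx
    have e1 : (P'.preEndpoints.filter fun y => y < x) =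
        P'.preEndpoints.filter fun y => f y < f x :=
      Finset.filter_congr (fun y hy => (ren_lt_iff (hpe_avoid y hy) hx).symm)
    have e2 : ((P'.preEndpoints.filter fun y => y < x).image f) =
        (P'.preEndpoints.image f).filter fun j => j < f x := by
      rw [e1, Finset.filter_image]
    have e3 : ((P.preEndpoints.filter fun y => y < x').image Fin.val) =
        (P.preEndpoints.image Fin.val).filter fun j => j < x'.val := by
      have hcg : (P.preEndpoints.filter fun y => y < x') =
          P.preEndpoints.filter fun y => y.val < x'.val :=
        Finset.filter_congr (fun y _ => Fin.lt_def)
      rw [hcg, Finset.filter_image]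
    calc (P'.preEndpoints.filter fun y => y < x).card
        = ((P'.preEndpoints.filter fun y => y < x).image f).card :=
          (Finset.card_image_of_injOn (fun u hu v hv h =>
            ren_inj (hpe_avoid u (Finset.mem_filter.mp hu).1)
              (hpe_avoid v (Finset.mem_filter.mp hv).1) h)).symm
      _ = ((P.preEndpoints.filter fun y => y < x').image Fin.val).card := by
          rw [e2, e3, hpe_im, hvx]
      _ = (P.preEndpoints.filter fun y => y < x').card :=
          Finset.card_image_of_injOn (fun u _ v _ h => Fin.val_injective h)
  have hidxim : ∀ c ∈ P'.pre, c.image P'.idx = (φ c).image P.idx := by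
    intro c hc
    have hcc := P'.pre_sub hc
    have hcR := hpre_nR c hc
    have spec := hφspec c hcc hcR
    have hav := havoid c hcc hcR
    ext j
    simp only [Finset.mem_image]
    constructor
    · rintro ⟨x, hxc, rfl⟩
      have hm : f x ∈ (φ c).image Fin.val := spec.2.1 ▸ Finset.mem_image_of_mem f hxc
      obtain ⟨x', hx', hvx⟩ := Finset.mem_image.mp hm
      exact ⟨x', hx', (hidx x (hav x hxc) x' hvx).symm⟩
    · rintro ⟨x', hx', rfl⟩
      have hm : x'.val ∈ c.image f := by
        rw [spec.2.1]; exact Finset.mem_image_of_mem _ hx'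
      obtain ⟨x, hxc, hfx⟩ := Finset.mem_image.mp hm
      exact ⟨x, hxc, hidx x (hav x hxc) x' hfx.symm⟩
  -- counting lemma and Interlaced transfer
  have hcount : ∀ (d : Finset (Fin (2 * (m + 2)))) (d' : Finset (Fin (2 * m))),
      (∀ x ∈ d, x ∉ Es) → d.image f = d'.image Fin.val →
      ∀ (p q : Fin (2 * (m + 2))) (p' q' : Fin (2 * m)), p ∉ Es → q ∉ Es →
      p'.val = f p → q'.val = f q →
      (d.filter fun x => CycBtw p x q).card =
        (d'.filter fun x => CycBtw p' x q').card := by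
    intro d d' hdav hdim p q p' q' hp hq hp' hq'
    have e1 : (d.filter fun x => CycBtw p x q) =
        d.filter fun x => NatCycBtw (f p) (f x) (f q) :=
      Finset.filter_congr (fun x hx => by
        rw [cycBtw_iff]
        exact natCycBtw_congr (Fin.lt_def.symm.trans (ren_lt_iff hp hq).symm)
          (Fin.lt_def.symm.trans (ren_lt_iff hp (hdav x hx)).symm)
          (Fin.lt_def.symm.trans (ren_lt_iff (hdav x hx) hq).symm))
    have e2 : (d.filter fun x => NatCycBtw (f p) (f x) (f q)).image f
        = (d.image f).filter fun j => NatCycBtw (f p) j (f q) := by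
      rw [Finset.filter_image]
    have e3 : (d'.filter fun x => CycBtw p' x q') =
        d'.filter fun x => NatCycBtw p'.val x.val q'.val :=
      Finset.filter_congr fun x _ => cycBtw_iff _ _ _
    have e4 : (d'.filter fun x => NatCycBtw p'.val x.val q'.val).image Fin.val
        = (d'.image Fin.val).filter fun j => NatCycBtw p'.val j q'.val := by
      rw [Finset.filter_image]
    calc (d.filter fun x => CycBtw p x q).card
        = ((d.filter fun x => CycBtw p x q).image f).card :=
          (Finset.card_image_of_injOn (fun u hu v hv h =>
            ren_inj (hdav u (Finset.mem_filter.mp hu).1)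
              (hdav v (Finset.mem_filter.mp hv).1) h)).symm
      _ = ((d'.filter fun x => CycBtw p' x q').image Fin.val).card := by
          rw [e1, e2, hdim, e3, e4, hp', hq']
      _ = (d'.filter fun x => CycBtw p' x q').card :=
          Finset.card_image_of_injOn (fun u _ v _ h => Fin.val_injective h)
  have hint : ∀ (c d : Finset (Fin (2 * (m + 2)))) (c' d' : Finset (Fin (2 * m))),
      c.card = 2 → (∀ x ∈ c, x ∉ Es) → (∀ x ∈ d, x ∉ Es) →
      c.image f = c'.image Fin.val → d.image f = d'.image Fin.val →
      (Interlaced c d ↔ Interlaced c' d') := by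
    intro c d c' d' hc2 hcav hdav hcim hdim
    constructor
    · rintro ⟨p, q, hpq, rfl, hcard⟩
      have hp : p ∈ ({p, q} : Finset (Fin (2 * (m + 2)))) := Finset.mem_insert_self _ _
      have hq : q ∈ ({p, q} : Finset (Fin (2 * (m + 2)))) :=
        Finset.mem_insert_of_mem (Finset.mem_singleton_self _)
      have hpE := hcav p hp
      have hqE := hcav q hq
      have hfp : f p ∈ c'.image Fin.val := hcim ▸ Finset.mem_image_of_mem f hp
      obtain ⟨p', hp'c, hvp⟩ := Finset.mem_image.mp hfp
      have hfq : f q ∈ c'.image Fin.val := hcim ▸ Finset.mem_image_of_mem f hq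
      obtain ⟨q', hq'c, hvq⟩ := Finset.mem_image.mp hfq
      have hp'q' : p' ≠ q' := by
        intro h
        exact hpq (ren_inj hpE hqE (hvp.symm.trans (h ▸ hvq)))
      have hc'eq : c' = {p', q'} := by
        apply hval_inj
        rw [← hcim]
        simp [Finset.image_insert, Finset.image_singleton, hvp, hvq]
      refine ⟨p', q', hp'q', hc'eq, ?_⟩
      rw [← hcount d d' hdav hdim p q p' q' hpE hqE hvp hvq]
      exact hcard
    · rintro ⟨p', q', hp'q', hc'eq, hcard⟩
      have hp' : p'.val ∈ c.image f := by
        rw [hcim, hc'eq]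
        exact Finset.mem_image_of_mem _ (Finset.mem_insert_self _ _)
      obtain ⟨p, hpc, hfp⟩ := Finset.mem_image.mp hp'
      have hq' : q'.val ∈ c.image f := by
        rw [hcim, hc'eq]
        exact Finset.mem_image_of_mem _
          (Finset.mem_insert_of_mem (Finset.mem_singleton_self _))
      obtain ⟨q, hqc, hfq⟩ := Finset.mem_image.mp hq'
      have hpq : p ≠ q := by
        intro h
        exact hp'q' (Fin.val_injective (hfp.symm.trans (h ▸ hfq)))
      have hceq : c = {p, q} := by
        refine (Finset.eq_of_subset_of_card_le ?_ ?_).symm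
        · intro x hx
          rcases Finset.mem_insert.mp hx with h | h
          · exact h ▸ hpc
          · exact (Finset.mem_singleton.mp h) ▸ hqc
        · rw [hc2, Finset.card_pair hpq]
      refine ⟨p, q, hpq, hceq, ?_⟩
      rw [hcount d d' hdav hdim p q p' q' (hcav p hpc) (hcav q hqc) hfp.symm hfq.symm]
      exact hcard
  -- interlacement with e₁ iff with e₂
  have hi12 : ∀ c ∈ P'.pre, (Interlaced c e₁ ↔ Interlaced c e₂) := by
    intro c hc
    have hav := hpre_avoid c hc
    have key : ∀ p q : Fin (2 * (m + 2)), p ∈ c → q ∈ c →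
        (e₁.filter fun x => CycBtw p x q).card =
          (e₂.filter fun x => CycBtw p x q).card := by
      intro p q hp hq
      have hpE := hav p hp
      have hqE := hav q hq
      have hp4 : p ≠ a ∧ p ≠ csucc a ∧ p ≠ b ∧ p ≠ csucc b := by
        have hne := hpE
        rw [hmemE, he₁def, he₂def] at hne
        simp only [Finset.mem_insert, Finset.mem_singleton, not_or] at hne
        exact ⟨hne.1.1, hne.2.1, hne.2.2, hne.1.2⟩
      have hq4 : q ≠ a ∧ q ≠ csucc a ∧ q ≠ b ∧ q ≠ csucc b := by
        have hne := hqE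
        rw [hmemE, he₁def, he₂def] at hne
        simp only [Finset.mem_insert, Finset.mem_singleton, not_or] at hne
        exact ⟨hne.1.1, hne.2.1, hne.2.2, hne.1.2⟩
      have hca : CycBtw p a q ↔ CycBtw p (csucc a) q :=
        cycBtw_csucc hp4.1 hp4.2.1 hq4.1 hq4.2.1
      have hcb : CycBtw p b q ↔ CycBtw p (csucc b) q :=
        cycBtw_csucc hp4.2.2.1 hp4.2.2.2 hq4.2.2.1 hq4.2.2.2
      rw [he₁def, he₂def, Finset.card_filter, Finset.card_filter,
        Finset.sum_pair hacb, Finset.sum_pair hcab, hca, hcb]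
    constructor
    · rintro ⟨p, q, hpq, hceq, hcard⟩
      have hp : p ∈ c := by rw [hceq]; exact Finset.mem_insert_self _ _
      have hq : q ∈ c := by
        rw [hceq]; exact Finset.mem_insert_of_mem (Finset.mem_singleton_self _)
      exact ⟨p, q, hpq, hceq, by rw [← key p q hp hq]; exact hcard⟩
    · rintro ⟨p, q, hpq, hceq, hcard⟩
      have hp : p ∈ c := by rw [hceq]; exact Finset.mem_insert_self _ _
      have hq : q ∈ c := by
        rw [hceq]; exact Finset.mem_insert_of_mem (Finset.mem_singleton_self _)
      exact ⟨p, q, hpq, hceq, by rw [key p q hp hq]; exact hcard⟩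
  have hclmem : ∀ {k : ℕ} (Q : PGD k) (dd : Finset (Fin (2 * k))),
      dd ∈ Q.classicalChords ↔ dd ∈ Q.chords ∧ dd ∉ Q.pre :=
    fun Q dd => Finset.mem_sdiff
  -- label correspondence
  have hlab : ∀ c ∈ P'.pre, P'.iLabel c = P.iLabel (φ c) := by
    intro c hc
    have hcc := P'.pre_sub hc
    have hcR := hpre_nR c hc
    have spec := hφspec c hcc hcR
    have hav := hpre_avoid c hc
    have hc2 := P'.two_mem c hcc
    unfold PGD.iLabel
    rw [← Finset.sum_filter_add_sum_filter_not
      (P'.classicalChords.filter fun d => Interlaced c d) (fun d => d ∈ R) P'.sign]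
    have hpart1 : ∑ d ∈ (P'.classicalChords.filter fun d => Interlaced c d).filter
        (fun d => d ∈ R), P'.sign d = 0 := by
      by_cases hI : Interlaced c e₁
      · have hset : (P'.classicalChords.filter fun d => Interlaced c d).filter
            (fun d => d ∈ R) = {e₁, e₂} := by
          ext d
          simp only [Finset.mem_filter, Finset.mem_insert, Finset.mem_singleton]
          constructor
          · rintro ⟨⟨_, _⟩, hdR⟩
            rw [hRdef] at hdR
            simpa using hdR
          · rintro (rfl | rfl)
            · exact ⟨⟨he₁, hI⟩, hR_e₁⟩
            · exact ⟨⟨he₂, (hi12 c hc).mp hI⟩, hR_e₂⟩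
        rw [hset, Finset.sum_pair he12, hsign]
        ring
      · have hset : (P'.classicalChords.filter fun d => Interlaced c d).filter
            (fun d => d ∈ R) = ∅ := by
          ext d
          simp only [Finset.mem_filter, Finset.notMem_empty, iff_false, not_and]
          rintro ⟨_, hInt⟩ hdR
          rw [hRdef] at hdR
          rcases Finset.mem_insert.mp hdR with h | h
          · exact hI (h ▸ hInt)
          · exact hI ((hi12 c hc).mpr ((Finset.mem_singleton.mp h) ▸ hInt))
        rw [hset, Finset.sum_empty]
    have hpart2 : ∑ d ∈ (P'.classicalChords.filter fun d => Interlaced c d).filter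
        (fun d => ¬ d ∈ R), P'.sign d
        = ∑ d' ∈ P.classicalChords.filter fun d' => Interlaced (φ c) d', P.sign d' := by
      apply Finset.sum_bij (i := fun d _ => φ d)
      · intro d hd
        simp only [Finset.mem_filter] at hd
        obtain ⟨⟨hdcl, hdint⟩, hdR⟩ := hd
        obtain ⟨hdch, hdnp⟩ := (hclmem P' d).mp hdcl
        have dspec := hφspec d hdch hdR
        refine Finset.mem_filter.mpr ⟨(hclmem P (φ d)).mpr
          ⟨dspec.1, fun h => hdnp (dspec.2.2.1.mpr h)⟩, ?_⟩
        exact (hint c d (φ c) (φ d) hc2 hav (havoid d hdch hdR)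
          spec.2.1 dspec.2.1).mp hdint
      · intro d₁ hd₁ d₂ hd₂ heq
        simp only [Finset.mem_filter] at hd₁ hd₂
        exact hφinj d₁ ((hclmem P' d₁).mp hd₁.1.1).1 hd₁.2
          d₂ ((hclmem P' d₂).mp hd₂.1.1).1 hd₂.2 heq
      · intro d' hd'
        simp only [Finset.mem_filter] at hd'
        obtain ⟨hd'cl, hd'int⟩ := hd'
        obtain ⟨hd'ch, hd'np⟩ := (hclmem P d').mp hd'cl
        obtain ⟨d, ⟨hdch, hdR⟩, rfl⟩ := hφsurj d' hd'ch
        have dspec := hφspec d hdch hdR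
        have hdnp : d ∉ P'.pre := fun h => hd'np (dspec.2.2.1.mp h)
        have hmem : d ∈ (P'.classicalChords.filter fun dd => Interlaced c dd).filter
            (fun dd => ¬ dd ∈ R) := by
          refine Finset.mem_filter.mpr ⟨Finset.mem_filter.mpr
            ⟨(hclmem P' d).mpr ⟨hdch, hdnp⟩, ?_⟩, hdR⟩
          exact (hint c d (φ c) (φ d) hc2 hav (havoid d hdch hdR)
            spec.2.1 dspec.2.1).mpr hd'int
        exact ⟨d, hmem, rfl⟩
      · intro d hd
        simp only [Finset.mem_filter] at hd
        exact (hφspec d ((hclmem P' d).mp hd.1.1).1 hd.2).2.2.2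
    rw [hpart1, hpart2, zero_add]
  -- assembling the equality of the invariants
  have hEq : P'.Imap = P.Imap := by
    unfold PGD.Imap
    rw [LCD.mk.injEq]
    refine ⟨hpts, ?_, ?_⟩
    · ext c₀
      simp only [Finset.mem_image]
      constructor
      · rintro ⟨c, hc, rfl⟩
        exact ⟨φ c, (hφspec c (P'.pre_sub hc) (hpre_nR c hc)).2.2.1.mp hc,
          (hidxim c hc).symm⟩
      · rintro ⟨c', hc', rfl⟩
        obtain ⟨c, ⟨hc, hcR⟩, rfl⟩ := hφsurj c' (P.pre_sub hc')
        have hcp : c ∈ P'.pre := (hφspec c hc hcR).2.2.1.mpr hc'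
        exact ⟨c, hcp, hidxim c hcp⟩
    · funext c₀
      apply Finset.sum_bij (i := fun c _ => φ c)
      · intro c hcf
        obtain ⟨hc, hcim⟩ := Finset.mem_filter.mp hcf
        exact Finset.mem_filter.mpr ⟨(hφspec c (P'.pre_sub hc) (hpre_nR c hc)).2.2.1.mp hc,
          by rw [← hidxim c hc]; exact hcim⟩
      · intro c₁ hc₁ c₂ hc₂ heq
        have h₁ := (Finset.mem_filter.mp hc₁).1
        have h₂ := (Finset.mem_filter.mp hc₂).1
        exact hφinj c₁ (P'.pre_sub h₁) (hpre_nR c₁ h₁)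
          c₂ (P'.pre_sub h₂) (hpre_nR c₂ h₂) heq
      · intro c' hc'f
        obtain ⟨hc', hcim'⟩ := Finset.mem_filter.mp hc'f
        obtain ⟨c, ⟨hc, hcR⟩, rfl⟩ := hφsurj c' (P.pre_sub hc')
        have hcp : c ∈ P'.pre := (hφspec c hc hcR).2.2.1.mpr hc'
        refine ⟨c, Finset.mem_filter.mpr ⟨hcp, ?_⟩, rfl⟩
        rw [hidxim c hcp]
        exact hcim'
      · intro c hcf
        exact hlab c (Finset.mem_filter.mp hcf).1
  rw [hEq]
  exact Relation.EqvGen.refl _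
end
end

section
/- The Reidemeister 3 move on Gauss diagrams does not change any interlacement between a moved chord and an untouched chord: let {p, p+1}, {q, q+1}, {r, r+1} be three pairwise disjoint pairs of cyclically adjacent points of Fin(2m) whose union equals the union of three chords of a pseudo-Gauss diagram P, and let P′ be obtained from P by applying to all chord endpoints the permutation transposing p ↔ p+1, q ↔ q+1 and r ↔ r+1 (keeping all markings and signs). Then for each of the three chords c involved in the move and every chord d of P whose endpoints lie outside the six points p, p+1, q, q+1, r, r+1, the (images of the) chords c and d are interlaced in P′ if and only if c and d are interlaced in P. -/
/-!
Formalization framework for pseudo-Gauss diagrams (Gauss diagrams of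
virtual pseudoknots), the interlacement-based invariants `I` and `I_h`,
and the Gauss-diagrammatic Reidemeister moves.
-/

noncomputable section
open scoped Classical

lemma cycbtw_pairs {n : ℕ} (s t : Fin n) {a a' b b' z : Fin n}
    (ha : a = s ∧ a' = csucc s ∨ a = csucc s ∧ a' = s)
    (hb : b = t ∧ b' = csucc t ∨ b = csucc t ∧ b' = t)
    (hst : s ≠ t) (hst' : s ≠ csucc t) (hs't : csucc s ≠ t) (hs't' : csucc s ≠ csucc t)
    (hzs : z ≠ s) (hzs' : z ≠ csucc s) (hzt : z ≠ t) (hzt' : z ≠ csucc t) :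
    CycBtw a z b ↔ CycBtw a' z b' := by
  have hs := s.isLt; have ht := t.isLt; have hzl := z.isLt
  have hcs : (csucc s).val = (s.val + 1) % n := rfl
  have hct : (csucc t).val = (t.val + 1) % n := rfl
  obtain ⟨ks, hks, hksc⟩ : ∃ k, (s.val + 1) % n = k ∧
      (k = s.val + 1 ∧ s.val + 1 < n ∨ k = 0 ∧ s.val + 1 = n) := by
    rcases Nat.lt_or_ge (s.val + 1) n with h | h
    · exact ⟨_, rfl, Or.inl ⟨Nat.mod_eq_of_lt h, h⟩⟩
    · have he : s.val + 1 = n := le_antisymm hs h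
      exact ⟨0, by rw [he, Nat.mod_self], Or.inr ⟨rfl, he⟩⟩
  obtain ⟨kt, hkt, hktc⟩ : ∃ k, (t.val + 1) % n = k ∧
      (k = t.val + 1 ∧ t.val + 1 < n ∨ k = 0 ∧ t.val + 1 = n) := by
    rcases Nat.lt_or_ge (t.val + 1) n with h | h
    · exact ⟨_, rfl, Or.inl ⟨Nat.mod_eq_of_lt h, h⟩⟩
    · have he : t.val + 1 = n := le_antisymm ht h
      exact ⟨0, by rw [he, Nat.mod_self], Or.inr ⟨rfl, he⟩⟩
  rcases ha with ⟨h1, h2⟩ | ⟨h1, h2⟩ <;> rcases hb with ⟨h3, h4⟩ | ⟨h3, h4⟩ <;>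
    subst h1 <;> subst h2 <;> subst h3 <;> subst h4 <;>
    simp only [CycBtw, Fin.lt_def, ne_eq, Fin.ext_iff, hcs, hct, hks, hkt] at * <;>
    split_ifs <;> omega


set_option maxHeartbeats 1000000 in
/-- The Reidemeister 3 move does not change any interlacement
between a moved chord and an untouched chord: if `{p,p+1}`, `{q,q+1}`, `{r,r+1}`
are pairwise disjoint pairs of cyclically adjacent points whose union is the
union of three chords `c₁, c₂, c₃` of `P`, then for each of these chords `c` and
every chord `d` of `P` whose endpoints avoid the six points, the images of `c`
and `d` under the permutation transposing `p ↔ p+1`, `q ↔ q+1`, `r ↔ r+1` are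
interlaced iff `c` and `d` are interlaced. -/
theorem R3_interlacement_unchanged {m : ℕ} (P : PGD m) (p q r : Fin (2 * m))
    (h₁ : Disjoint ({p, csucc p} : Finset (Fin (2 * m))) {q, csucc q})
    (h₂ : Disjoint ({p, csucc p} : Finset (Fin (2 * m))) {r, csucc r})
    (h₃ : Disjoint ({q, csucc q} : Finset (Fin (2 * m))) {r, csucc r})
    (c₁ c₂ c₃ : Finset (Fin (2 * m)))
    (hc₁ : c₁ ∈ P.chords) (hc₂ : c₂ ∈ P.chords) (hc₃ : c₃ ∈ P.chords)
    (hunion : ({p, csucc p} ∪ {q, csucc q} ∪ {r, csucc r} : Finset (Fin (2 * m)))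
      = c₁ ∪ c₂ ∪ c₃) :
    ∀ c ∈ ({c₁, c₂, c₃} : Finset (Finset (Fin (2 * m)))),
      ∀ d ∈ P.chords,
        (∀ z ∈ d, z ∉ ({p, csucc p} ∪ {q, csucc q} ∪ {r, csucc r} :
            Finset (Fin (2 * m)))) →
        (Interlaced (c.image (tripleSwap p q r)) (d.image (tripleSwap p q r)) ↔
          Interlaced c d) := by
  intro c hc d hd hdav
  set σ := tripleSwap p q r with hσdef
  simp only [Finset.disjoint_insert_left, Finset.disjoint_singleton_left,
    Finset.mem_insert, Finset.mem_singleton, not_or] at h₁ h₂ h₃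
  obtain ⟨⟨hpq, hpq'⟩, hp'q, hp'q'⟩ := h₁
  obtain ⟨⟨hpr, hpr'⟩, hp'r, hp'r'⟩ := h₂
  obtain ⟨⟨hqr, hqr'⟩, hq'r, hq'r'⟩ := h₃
  -- values of σ on the six points
  have hσp : σ p = csucc p := by
    rw [hσdef]; unfold tripleSwap
    rw [Equiv.swap_apply_of_ne_of_ne hpr hpr', Equiv.swap_apply_of_ne_of_ne hpq hpq',
      Equiv.swap_apply_left]
  have hσp' : σ (csucc p) = p := by
    rw [hσdef]; unfold tripleSwap
    rw [Equiv.swap_apply_of_ne_of_ne hp'r hp'r', Equiv.swap_apply_of_ne_of_ne hp'q hp'q',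
      Equiv.swap_apply_right]
  have hσq : σ q = csucc q := by
    rw [hσdef]; unfold tripleSwap
    rw [Equiv.swap_apply_of_ne_of_ne hqr hqr', Equiv.swap_apply_left,
      Equiv.swap_apply_of_ne_of_ne (Ne.symm hpq') (Ne.symm hp'q')]
  have hσq' : σ (csucc q) = q := by
    rw [hσdef]; unfold tripleSwap
    rw [Equiv.swap_apply_of_ne_of_ne hq'r hq'r', Equiv.swap_apply_right,
      Equiv.swap_apply_of_ne_of_ne (Ne.symm hpq) (Ne.symm hp'q)]
  have hσr : σ r = csucc r := by
    rw [hσdef]; unfold tripleSwap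
    rw [Equiv.swap_apply_left, Equiv.swap_apply_of_ne_of_ne (Ne.symm hqr') (Ne.symm hq'r'),
      Equiv.swap_apply_of_ne_of_ne (Ne.symm hpr') (Ne.symm hp'r')]
  have hσr' : σ (csucc r) = r := by
    rw [hσdef]; unfold tripleSwap
    rw [Equiv.swap_apply_right, Equiv.swap_apply_of_ne_of_ne (Ne.symm hqr) (Ne.symm hq'r),
      Equiv.swap_apply_of_ne_of_ne (Ne.symm hpr) (Ne.symm hp'r)]
  have hinj : Function.Injective σ := by
    intro x y h
    rw [hσdef] at h; unfold tripleSwap at h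
    exact (Equiv.swap r (csucc r)).injective
      ((Equiv.swap q (csucc q)).injective ((Equiv.swap p (csucc p)).injective h))
  -- facts about points of d
  have hzfacts : ∀ z ∈ d, z ≠ p ∧ z ≠ csucc p ∧ z ≠ q ∧ z ≠ csucc q ∧ z ≠ r ∧ z ≠ csucc r := by
    intro z hz
    have := hdav z hz
    simp only [Finset.mem_union, Finset.mem_insert, Finset.mem_singleton, not_or] at this
    tauto
  have hdimg : d.image σ = d := by
    have : ∀ z ∈ d, σ z = z := by
      intro z hz
      obtain ⟨e1, e2, e3, e4, e5, e6⟩ := hzfacts z hz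
      rw [hσdef]; unfold tripleSwap
      rw [Equiv.swap_apply_of_ne_of_ne e5 e6, Equiv.swap_apply_of_ne_of_ne e3 e4,
        Equiv.swap_apply_of_ne_of_ne e1 e2]
    calc d.image σ = d.image id := Finset.image_congr this
      _ = d := Finset.image_id
  -- c is a chord contained in the six points
  have hcP : c ∈ P.chords := by
    simp only [Finset.mem_insert, Finset.mem_singleton] at hc
    rcases hc with rfl | rfl | rfl <;> assumption
  have hccard : c.card = 2 := P.two_mem c hcP
  have hcsub : ∀ x ∈ c, (x = p ∨ x = csucc p) ∨ (x = q ∨ x = csucc q) ∨ (x = r ∨ x = csucc r) := by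
    intro x hx
    have hxc : x ∈ c₁ ∪ c₂ ∪ c₃ := by
      simp only [Finset.mem_insert, Finset.mem_singleton] at hc
      rcases hc with rfl | rfl | rfl
      · exact Finset.mem_union_left _ (Finset.mem_union_left _ hx)
      · exact Finset.mem_union_left _ (Finset.mem_union_right _ hx)
      · exact Finset.mem_union_right _ hx
    rw [← hunion] at hxc
    simp only [Finset.mem_union, Finset.mem_insert, Finset.mem_singleton] at hxc
    rcases hxc with (h | h) | h
    exacts [Or.inl h, Or.inr (Or.inl h), Or.inr (Or.inr h)]
  have hceq2 : ∀ x ∈ c, ∀ y ∈ c, x ≠ y → c = {x, y} := by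
    intro x hx y hy hxy
    refine (Finset.eq_of_subset_of_card_le ?_ ?_).symm
    · intro w hw
      simp only [Finset.mem_insert, Finset.mem_singleton] at hw
      rcases hw with rfl | rfl <;> assumption
    · rw [hccard, Finset.card_insert_of_notMem (by simp [hxy]), Finset.card_singleton]
  by_cases hsame : c = {p, csucc p} ∨ c = {q, csucc q} ∨ c = {r, csucc r}
  · have hcimg : c.image σ = c := by
      rcases hsame with rfl | rfl | rfl <;>
        rw [Finset.image_insert, Finset.image_singleton] <;>
        simp only [hσp, hσp', hσq, hσq', hσr, hσr'] <;>
        rw [Finset.pair_comm]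
    rw [hcimg, hdimg]
  · -- the key pointwise claim
    have key : ∀ x ∈ c, ∀ y ∈ c, x ≠ y → ∀ z ∈ d, (CycBtw x z y ↔ CycBtw (σ x) z (σ y)) := by
      intro x hx y hy hxy z hz
      obtain ⟨e1, e2, e3, e4, e5, e6⟩ := hzfacts z hz
      have hx6 := hcsub x hx
      have hy6 := hcsub y hy
      have mk : ∀ s : Fin (2 * m), σ s = csucc s → σ (csucc s) = s → ∀ w, (w = s ∨ w = csucc s) →
          (w = s ∧ σ w = csucc s ∨ w = csucc s ∧ σ w = s) := by
        rintro s hs1 hs2 w (rfl | rfl)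
        · exact Or.inl ⟨rfl, hs1⟩
        · exact Or.inr ⟨rfl, hs2⟩
      have hpair : ∀ s : Fin (2 * m), (x = s ∨ x = csucc s) → (y = s ∨ y = csucc s) →
          c = {s, csucc s} := by
        rintro s hxs hys
        rcases hxs with h1 | h1 <;> rcases hys with h2 | h2
        · exact absurd (h1.trans h2.symm) hxy
        · rw [← h2, ← h1]; exact hceq2 x hx y hy hxy
        · rw [← h1, ← h2]; exact hceq2 y hy x hx (Ne.symm hxy)
        · exact absurd (h1.trans h2.symm) hxy
      rcases hx6 with hx6 | hx6 | hx6 <;> rcases hy6 with hy6 | hy6 | hy6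
      · exact absurd (hpair p hx6 hy6) (fun h => hsame (Or.inl h))
      · exact cycbtw_pairs p q (mk p hσp hσp' x hx6) (mk q hσq hσq' y hy6)
          hpq hpq' hp'q hp'q' e1 e2 e3 e4
      · exact cycbtw_pairs p r (mk p hσp hσp' x hx6) (mk r hσr hσr' y hy6)
          hpr hpr' hp'r hp'r' e1 e2 e5 e6
      · exact cycbtw_pairs q p (mk q hσq hσq' x hx6) (mk p hσp hσp' y hy6)
          (Ne.symm hpq) (Ne.symm hp'q) (Ne.symm hpq') (Ne.symm hp'q') e3 e4 e1 e2
      · exact absurd (hpair q hx6 hy6) (fun h => hsame (Or.inr (Or.inl h)))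
      · exact cycbtw_pairs q r (mk q hσq hσq' x hx6) (mk r hσr hσr' y hy6)
          hqr hqr' hq'r hq'r' e3 e4 e5 e6
      · exact cycbtw_pairs r p (mk r hσr hσr' x hx6) (mk p hσp hσp' y hy6)
          (Ne.symm hpr) (Ne.symm hp'r) (Ne.symm hpr') (Ne.symm hp'r') e5 e6 e1 e2
      · exact cycbtw_pairs r q (mk r hσr hσr' x hx6) (mk q hσq hσq' y hy6)
          (Ne.symm hqr) (Ne.symm hq'r) (Ne.symm hqr') (Ne.symm hq'r') e5 e6 e3 e4
      · exact absurd (hpair r hx6 hy6) (fun h => hsame (Or.inr (Or.inr h)))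
    constructor
    · rintro ⟨x', y', hxy', hceq', hcard'⟩
      have hx' : x' ∈ c.image σ := by rw [hceq']; simp
      have hy' : y' ∈ c.image σ := by rw [hceq']; simp
      obtain ⟨x, hxc, rfl⟩ := Finset.mem_image.mp hx'
      obtain ⟨y, hyc, rfl⟩ := Finset.mem_image.mp hy'
      have hxy : x ≠ y := fun h => hxy' (by rw [h])
      refine ⟨x, y, hxy, hceq2 x hxc y hyc hxy, ?_⟩
      rw [hdimg] at hcard'
      rwa [Finset.filter_congr (fun z hz => key x hxc y hyc hxy z hz)]
    · rintro ⟨x, y, hxy, hceq, hcard⟩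
      have hxc : x ∈ c := by rw [hceq]; simp
      have hyc : y ∈ c := by rw [hceq]; simp
      refine ⟨σ x, σ y, fun h => hxy (hinj h), ?_, ?_⟩
      · rw [hceq, Finset.image_insert, Finset.image_singleton]
      · rw [hdimg, ← Finset.filter_congr (fun z hz => key x hxc y hyc hxy z hz)]
        exact hcard
end
end

section
/- The map I is invariant under the Reidemeister 3 move on pseudo-Gauss diagrams: let {p, p+1}, {q, q+1}, {r, r+1} be three pairwise disjoint pairs of cyclically adjacent points of Fin(2m) whose union equals the union of three classical chords of P, and let P′ be obtained from P by applying to all chord endpoints the permutation transposing p ↔ p+1, q ↔ q+1 and r ↔ r+1, keeping all markings and signs. Then I(P′) and I(P) are equivalent ℤ-labeled chord diagrams (in fact equal). -/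
/-!
Formalization framework for pseudo-Gauss diagrams (Gauss diagrams of
virtual pseudoknots), the interlacement-based invariants `I` and `I_h`,
and the Gauss-diagrammatic Reidemeister moves.
-/

noncomputable section
open scoped Classical

lemma csucc_spec {n : ℕ} (p : Fin n) :
    ((csucc p).val = p.val + 1 ∧ p.val + 1 < n) ∨ ((csucc p).val = 0 ∧ p.val + 1 = n) := by
  have h := p.isLt
  rcases Nat.lt_or_ge (p.val + 1) n with h' | h'
  · exact Or.inl ⟨Nat.mod_eq_of_lt h', h'⟩
  · have hn : p.val + 1 = n := by omega
    refine Or.inr ⟨?_, hn⟩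
    show (p.val + 1) % n = 0
    rw [hn, Nat.mod_self]

lemma cycbtw_adj {n : ℕ} (p a b : Fin n) (hap : a ≠ p) (has : a ≠ csucc p)
    (hbp : b ≠ p) (hbs : b ≠ csucc p) :
    CycBtw a (csucc p) b ↔ CycBtw a p b := by
  have hap' : a.val ≠ p.val := fun h => hap (Fin.ext h)
  have has' : a.val ≠ (csucc p).val := fun h => has (Fin.ext h)
  have hbp' : b.val ≠ p.val := fun h => hbp (Fin.ext h)
  have hbs' : b.val ≠ (csucc p).val := fun h => hbs (Fin.ext h)
  have ha := a.isLt; have hb := b.isLt; have hp := p.isLt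
  rcases csucc_spec p with ⟨h1, h2⟩ | ⟨h1, h2⟩ <;>
  · simp only [CycBtw, Fin.lt_def]
    rw [h1] at has' hbs' ⊢
    split_ifs <;> omega

lemma cycbtw_swap {n : ℕ} (p a b x : Fin n) (hap : a ≠ p) (has : a ≠ csucc p)
    (hbp : b ≠ p) (hbs : b ≠ csucc p) :
    CycBtw a (Equiv.swap p (csucc p) x) b ↔ CycBtw a x b := by
  rcases eq_or_ne x p with rfl | hx
  · rw [Equiv.swap_apply_left]
    exact cycbtw_adj _ a b hap has hbp hbs
  rcases eq_or_ne x (csucc p) with rfl | hx'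
  · rw [Equiv.swap_apply_right]
    exact (cycbtw_adj _ a b hap has hbp hbs).symm
  · rw [Equiv.swap_apply_of_ne_of_ne hx hx']

lemma cycbtw_tripleSwap {n : ℕ} (p q r a b x : Fin n)
    (h1 : a ≠ p) (h2 : a ≠ csucc p) (h3 : a ≠ q) (h4 : a ≠ csucc q)
    (h5 : a ≠ r) (h6 : a ≠ csucc r)
    (k1 : b ≠ p) (k2 : b ≠ csucc p) (k3 : b ≠ q) (k4 : b ≠ csucc q)
    (k5 : b ≠ r) (k6 : b ≠ csucc r) :
    CycBtw a (tripleSwap p q r x) b ↔ CycBtw a x b := by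
  unfold tripleSwap
  rw [cycbtw_swap p a b _ h1 h2 k1 k2, cycbtw_swap q a b _ h3 h4 k3 k4,
    cycbtw_swap r a b _ h5 h6 k5 k6]

/-- `I` is invariant under the Reidemeister 3 move: if `P'` is
obtained from `P` by the R3 move (transposing `p ↔ p+1`, `q ↔ q+1`, `r ↔ r+1`
within three pairwise disjoint pairs of cyclically adjacent points whose union
is the union of three classical chords, keeping all markings and signs), then
`I(P')` and `I(P)` are equivalent `ℤ`-labeled chord diagrams — in fact equal. -/
theorem Imap_invariant_R3 {m : ℕ} (P P' : PGD m) (p q r : Fin (2 * m))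
    (h : R3Hyp P P' p q r) :
    P'.Imap = P.Imap ∧ LCDEquiv P'.Imap P.Imap := by
  obtain ⟨hpq, hpr, hqr, ⟨c₁, hc₁, c₂, hc₂, c₃, hc₃, hS⟩, hch, hpre, hsign⟩ := h
  set σ := tripleSwap p q r with hσdef
  have hσ : Function.Injective σ := by
    intro x y hxy
    have hxy' : Equiv.swap p (csucc p) (Equiv.swap q (csucc q) (Equiv.swap r (csucc r) x)) =
        Equiv.swap p (csucc p) (Equiv.swap q (csucc q) (Equiv.swap r (csucc r) y)) := hxy
    exact (Equiv.swap r (csucc r)).injective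
      ((Equiv.swap q (csucc q)).injective ((Equiv.swap p (csucc p)).injective hxy'))
  have hfinj : Function.Injective (fun c : Finset (Fin (2 * m)) => c.image σ) :=
    Finset.image_injective hσ
  -- endpoints of prechords avoid the six swapped points
  have hnotS : ∀ c ∈ P.pre, ∀ a ∈ c,
      a ∉ ({p, csucc p} ∪ {q, csucc q} ∪ {r, csucc r} : Finset (Fin (2 * m))) := by
    intro c hc a hac haS
    rw [hS] at haS
    simp only [Finset.mem_union] at haS
    have hex : ∃ d ∈ P.classicalChords, a ∈ d := by
      rcases haS with (hh | hh) | hh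
      exacts [⟨c₁, hc₁, hh⟩, ⟨c₂, hc₂, hh⟩, ⟨c₃, hc₃, hh⟩]
    obtain ⟨d, hd, had⟩ := hex
    have hd' : d ∈ P.chords \ P.pre := hd
    have hcch : c ∈ P.chords := P.pre_sub hc
    have hdch : d ∈ P.chords := (Finset.mem_sdiff.mp hd').1
    obtain ⟨u, -, huniq⟩ := P.partition a
    have hcd : c = d := (huniq c ⟨hcch, hac⟩).trans (huniq d ⟨hdch, had⟩).symm
    exact (Finset.mem_sdiff.mp hd').2 (hcd ▸ hc)
  have hfixpt : ∀ c ∈ P.pre, ∀ a ∈ c, σ a = a := by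
    intro c hc a hac
    have := hnotS c hc a hac
    simp only [Finset.mem_union, Finset.mem_insert, Finset.mem_singleton, not_or] at this
    obtain ⟨⟨⟨h1, h2⟩, h3, h4⟩, h5, h6⟩ := this
    show tripleSwap p q r a = a
    unfold tripleSwap
    rw [Equiv.swap_apply_of_ne_of_ne h5 h6, Equiv.swap_apply_of_ne_of_ne h3 h4,
      Equiv.swap_apply_of_ne_of_ne h1 h2]
  have hfixc : ∀ c ∈ P.pre, c.image σ = c := by
    intro c hc
    have : c.image σ = c.image id := Finset.image_congr (fun a ha => hfixpt c hc a ha)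
    rwa [Finset.image_id] at this
  have hpre' : P'.pre = P.pre := by
    rw [hpre]
    have : P.pre.image (fun c => c.image σ) = P.pre.image id :=
      Finset.image_congr (fun c hc => hfixc c hc)
    rw [this, Finset.image_id]
  have hpe : P'.preEndpoints = P.preEndpoints := by
    unfold PGD.preEndpoints
    rw [hpre']
  have hidx : P'.idx = P.idx := by
    funext x
    unfold PGD.idx
    rw [hpe]
  -- interlacement is unchanged
  have hint : ∀ c ∈ P.pre, ∀ d : Finset (Fin (2 * m)),
      Interlaced c (d.image σ) ↔ Interlaced c d := by
    intro c hc d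
    unfold Interlaced
    refine exists_congr fun a => exists_congr fun b => and_congr_right fun hab =>
      and_congr_right fun hcab => ?_
    have haS := hnotS c hc a (by rw [hcab]; exact Finset.mem_insert_self a {b})
    have hbS := hnotS c hc b (by rw [hcab]; simp)
    simp only [Finset.mem_union, Finset.mem_insert, Finset.mem_singleton, not_or] at haS hbS
    obtain ⟨⟨⟨h1, h2⟩, h3, h4⟩, h5, h6⟩ := haS
    obtain ⟨⟨⟨k1, k2⟩, k3, k4⟩, k5, k6⟩ := hbS
    rw [Finset.filter_image, Finset.card_image_of_injective _ hσ]
    have : d.filter (fun x => CycBtw a (σ x) b) = d.filter (fun x => CycBtw a x b) :=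
      Finset.filter_congr (fun x _ =>
        cycbtw_tripleSwap p q r a b x h1 h2 h3 h4 h5 h6 k1 k2 k3 k4 k5 k6)
    rw [this]
  -- classical chords of P' are the images of those of P
  have hcc : P'.classicalChords = P.classicalChords.image (fun c => c.image σ) := by
    unfold PGD.classicalChords
    rw [hch, hpre, ← Finset.image_sdiff _ _ hfinj]
  -- the labels agree
  have hil : ∀ c ∈ P.pre, P'.iLabel c = P.iLabel c := by
    intro c hc
    unfold PGD.iLabel
    rw [hcc, Finset.filter_image,
      Finset.sum_image (fun x _ y _ hxy => hfinj hxy)]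
    refine Finset.sum_congr (Finset.filter_congr fun d _ => hint c hc d) ?_
    intro d hd
    have hdch : d ∈ P.chords := by
      have : d ∈ P.chords \ P.pre := (Finset.mem_filter.mp hd).1
      exact (Finset.mem_sdiff.mp this).1
    exact hsign d hdch
  have hIeq : P'.Imap = P.Imap := by
    unfold PGD.Imap
    simp only [hpe, hpre', hidx]
    congr 1
    funext c'
    exact Finset.sum_congr rfl (fun c hcmem => hil c (Finset.mem_filter.mp hcmem).1)
  exact ⟨hIeq, hIeq ▸ Relation.EqvGen.refl P.Imap⟩
end
end
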